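/- arXiv:math/0610632 — 8 statements merged into one kernel-verified Lean document; each statement's English description precedes it below -/
import Mathlib

section
/- Let p be a prime, T a group with a maximal subgroup N of index p that is abelian of exponent dividing p. Then N is normal in T, and for any σ ∈ T \ N, the commutator subgroup [T,T] equals [⟨σ⟩, N], i.e. the subgroup generated by commutators [σ,n] for n ∈ N. -/
open Subgroup
open scoped Nat commutatorElement

/-!
Normality: the kernel `K` of the action of `T` on the `p` cosets of `N` has index dividing `p!`,
so `|N : K| = |T : K| / p` divides `(p - 1)!`. But `N` has exponent `p`, so `N / K` is a
`p`-group and `|N : K|` is a power of `p`; as `p ∤ (p - 1)!`, this forces `N = K`.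

Commutators: `[⟨σ⟩, N]` is normalized by both `⟨σ⟩` and `N`, hence normal in `T = N ⊔ ⟨σ⟩`.
Modulo it, `σ` commutes with `N` and `N` is abelian, so `T / [⟨σ⟩, N]` is abelian.
-/

namespace Subgroup

variable {G : Type*} [Group G]

theorem normal_of_index_eq_prime_of_isPGroup {p : ℕ} (hp : p.Prime) {H : Subgroup G}
    (hH : H.index = p) (hpH : IsPGroup p H) : H.Normal := by
  have := Fact.mk hp
  have : H.FiniteIndex := ⟨hH ▸ hp.ne_zero⟩
  obtain ⟨n, hn⟩ := hpH.index (H.normalCore.subgroupOf H)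
  have hcore : H.normalCore.index ∣ p ! := by
    rw [normalCore_eq_ker, index_ker, ← hH, index_eq_card H, ← Nat.card_perm]
    exact card_subgroup_dvd_card _
  rw [← relIndex_mul_index H.normalCore_le, hH, relIndex, hn, ← Nat.mul_factorial_pred hp.ne_zero,
    mul_comm, Nat.mul_dvd_mul_iff_left hp.pos] at hcore
  have hn0 : n = 0 := by
    by_contra hn0
    have := (hp.dvd_factorial).mp ((dvd_pow_self p hn0).trans hcore)
    have := hp.pos
    omega
  have hle : H ≤ H.normalCore := relIndex_eq_one.mp (by rw [relIndex, hn, hn0, pow_zero])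
  exact le_antisymm H.normalCore_le hle ▸ H.normalCore_normal

theorem commutator_le_of_closure_eq_top {s : Set G} (hs : closure s = ⊤) {C : Subgroup G}
    [C.Normal] (hC : ∀ x ∈ s, ∀ y ∈ s, ⁅x, y⁆ ∈ C) : _root_.commutator G ≤ C := by
  rw [← Normal.quotient_commutative_iff_commutator_le]
  have htop : closure (QuotientGroup.mk' C '' s) = ⊤ := by
    rw [← MonoidHom.map_closure, hs, ← MonoidHom.range_eq_map, MonoidHom.range_eq_top]
    exact QuotientGroup.mk'_surjective C
  have := isMulCommutative_closure (k := QuotientGroup.mk' C '' s) <| by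
    rintro _ ⟨x, hx, rfl⟩ _ ⟨y, hy, rfl⟩
    rw [← commutatorElement_eq_one_iff_mul_comm, ← map_commutatorElement, QuotientGroup.mk'_apply,
      QuotientGroup.eq_one_iff]
    exact hC x hx y hy
  exact ⟨⟨fun a b ↦ setLike_mul_comm (htop ▸ mem_top a) (htop ▸ mem_top b)⟩⟩

theorem commutator_eq_commutator_zpowers_of_isCoatom {N : Subgroup G} (hN : IsCoatom N)
    (hab : ∀ x ∈ N, ∀ y ∈ N, Commute x y) {g : G} (hg : g ∉ N) :
    _root_.commutator G = ⁅zpowers g, N⁆ := by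
  have htop : N ⊔ zpowers g = ⊤ :=
    hN.2 _ (left_lt_sup.mpr fun h ↦ hg (h (mem_zpowers g)))
  have : ⁅zpowers g, N⁆.Normal := normalizer_eq_top_iff.mp <| top_le_iff.mp <|
    htop ▸ sup_le (normalizer_commutator_ge_right _ _) (normalizer_commutator_ge_left _ _)
  refine le_antisymm (commutator_le_of_closure_eq_top (s := N ∪ {g}) ?_ ?_) ?_
  · rw [closure_union, closure_eq, ← zpowers_eq_closure, htop]
  · rintro x (hx | rfl) y (hy | rfl)
    · rw [(hab x hx y hy).commutator_eq]
      exact one_mem _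
    · rw [← commutatorElement_inv]
      exact inv_mem (commutator_mem_commutator (mem_zpowers _) hx)
    · exact commutator_mem_commutator (mem_zpowers _) hy
    · rw [commutatorElement_self]
      exact one_mem _
  · rw [_root_.commutator_def]
    exact commutator_mono le_top le_top

end Subgroup

/-- Let `p` be a prime, `T` a group with a maximal subgroup `N` of index
`p` that is abelian of exponent dividing `p`. Then `N` is normal in `T`, and for any
`σ ∈ T \ N`, the commutator subgroup `[T,T]` equals `[⟨σ⟩, N]`. -/
theorem stmt0 (p : ℕ) (hp : p.Prime) (T : Type*) [Group T]
    (N : Subgroup T) (hmax : IsCoatom N) (hidx : N.index = p)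
    (hab : ∀ x ∈ N, ∀ y ∈ N, Commute x y)
    (hexp : ∀ x ∈ N, x ^ p = 1)
    (σ : T) (hσ : σ ∉ N) :
    N.Normal ∧ commutator T = ⁅Subgroup.zpowers σ, N⁆ :=
  ⟨normal_of_index_eq_prime_of_isPGroup hp hidx fun x ↦
      ⟨1, Subtype.ext (by simpa using hexp x x.2)⟩,
    commutator_eq_commutator_zpowers_of_isCoatom hmax hab hσ⟩
end

section
/- Let p be a prime, T a group with a normal abelian subgroup N of index p of exponent dividing p, and σ ∈ T \ N. Then for every δ ∈ N and every i ≥ 1, (δσ)^i = (∏_{k=1}^{i-1} (ad_σ)^k(δ)^{binom(i,k+1)}) · δ^i · σ^i, where ad_σ(x) = σxσ^{-1}x^{-1} and (ad_σ)^k denotes the k-fold iterated commutator with σ. In particular (δσ)^p = σ^p · c for some c in the (p)-th term of the lower central series of T. -/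
open scoped commutatorElement

/-- The `k`-fold iterated commutator `^k[σ,δ]`: `adIter σ 0 δ = δ`,
`adIter σ (k+1) δ = ⁅σ, adIter σ k δ⁆`. -/
def adIter {T : Type*} [Group T] (σ : T) : ℕ → T → T
  | 0, δ => δ
  | k + 1, δ => ⁅σ, adIter σ k δ⁆

/-- Let `p` be a prime, `T` a group with a normal abelian subgroup `N` of
index `p` of exponent dividing `p`, and `σ ∈ T \ N`.  Then for every `δ ∈ N` and every
`i ≥ 1`, `(δσ)^i = (∏_{k=1}^{i-1} (ad_σ)^k(δ)^(binom i (k+1))) · δ^i · σ^i`; in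
particular `(δσ)^p = σ^p · c` for some `c` in the `p`-th term of the lower central
series of `T` (which is `(⊤ : Subgroup T).lowerCentralSeries (p-1)` in Mathlib's indexing). -/
lemma listprod_eq_finprod {M : Type*} [CommMonoid M] (n : ℕ) (f : ℕ → M) :
    ((List.range n).map f).prod = ∏ k ∈ Finset.range n, f k := by
  induction n with
  | zero => simp
  | succ n ih => rw [List.range_succ, Finset.prod_range_succ, List.map_append,
      List.prod_append, ih]; simp

/-- Let `p` be a prime, `T` a group with a normal abelian subgroup `N` of
index `p` of exponent dividing `p`, and `σ ∈ T \ N`.  Then for every `δ ∈ N` and every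
`i ≥ 1`, `(δσ)^i = (∏_{k=1}^{i-1} (ad_σ)^k(δ)^(binom i (k+1))) · δ^i · σ^i`; in
particular `(δσ)^p = σ^p · c` for some `c` in the `p`-th term of the lower central
series of `T` (which is `lowerCentralSeries T (p-1)` in Mathlib's indexing). -/
theorem stmt1 (p : ℕ) (hp : p.Prime) {T : Type*} [Group T]
    (N : Subgroup T) [N.Normal] (hidx : N.index = p)
    (hab : ∀ x ∈ N, ∀ y ∈ N, Commute x y)
    (hexp : ∀ x ∈ N, x ^ p = 1)
    (σ : T) (hσ : σ ∉ N) (δ : T) (hδ : δ ∈ N) :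
    (∀ i : ℕ, 1 ≤ i →
      (δ * σ) ^ i =
        (((List.range (i - 1)).map
            (fun k => adIter σ (k + 1) δ ^ Nat.choose i (k + 2))).prod)
          * δ ^ i * σ ^ i) ∧
    ∃ c ∈ (⊤ : Subgroup T).lowerCentralSeries (p - 1), (δ * σ) ^ p = σ ^ p * c := by
  classical
  have nN : N.Normal := inferInstance
  letI : CommGroup ↥N :=
    { (inferInstance : Group ↥N) with
      mul_comm := fun a b => Subtype.ext (hab _ a.2 _ b.2) }
  have haN : ∀ k, adIter σ k δ ∈ N := by
    intro k
    induction k with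
    | zero => exact hδ
    | succ k ih =>
        show ⁅σ, adIter σ k δ⁆ ∈ N
        rw [commutatorElement_def]
        exact mul_mem (nN.conj_mem _ ih σ) (inv_mem ih)
  set b : ℕ → ↥N := fun k => ⟨adIter σ k δ, haN k⟩ with hbdef
  let φ : ↥N →* ↥N :=
    { toFun := fun x => ⟨σ * (x : T) * σ⁻¹, nN.conj_mem _ x.2 σ⟩
      map_one' := by ext; simp
      map_mul' := by intro x y; ext; show σ * ((x : T) * (y : T)) * σ⁻¹ = σ * (x : T) * σ⁻¹ * (σ * (y : T) * σ⁻¹); group }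
  have hφcoe : ∀ x : ↥N, (φ x : T) = σ * (x : T) * σ⁻¹ := fun _ => rfl
  have hφb : ∀ k, φ (b k) = b (k + 1) * b k := by
    intro k
    ext
    show σ * adIter σ k δ * σ⁻¹ = ⁅σ, adIter σ k δ⁆ * adIter σ k δ
    rw [commutatorElement_def]; group
  set B : ℕ → ↥N := fun i => ∏ k ∈ Finset.range i, b k ^ Nat.choose i (k + 1) with hBdef
  have hB : ∀ i, B (i + 1) = b 0 * φ (B i) := by
    intro i
    have h1 : φ (B i) = (∏ k ∈ Finset.range i, b (k + 1) ^ Nat.choose i (k + 1)) *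
        ∏ k ∈ Finset.range i, b k ^ Nat.choose i (k + 1) := by
      rw [hBdef, map_prod, ← Finset.prod_mul_distrib]
      exact Finset.prod_congr rfl fun k _ => by rw [map_pow, hφb, mul_pow]
    rw [h1]
    have h2 : B (i + 1)
        = (∏ k ∈ Finset.range (i + 1), b k ^ Nat.choose i k) *
          ∏ k ∈ Finset.range (i + 1), b k ^ Nat.choose i (k + 1) := by
      rw [hBdef, ← Finset.prod_mul_distrib]
      exact Finset.prod_congr rfl fun k _ => by
        rw [Nat.choose_succ_succ, pow_add]
    rw [h2, Finset.prod_range_succ' (fun k => b k ^ Nat.choose i k),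
      Finset.prod_range_succ (fun k => b k ^ Nat.choose i (k + 1)),
      Nat.choose_succ_self, Nat.choose_zero_right, pow_one, pow_zero, mul_one]
    rw [mul_comm _ (b 0), mul_assoc]
  have main : ∀ i, (δ * σ) ^ i = (B i : T) * σ ^ i := by
    intro i
    induction i with
    | zero => simp [hBdef]
    | succ i ih =>
        have hδb : δ = (b 0 : T) := rfl
        rw [pow_succ', ih, hB i, Subgroup.coe_mul, hφcoe]
        rw [pow_succ' σ]
        conv_lhs => rw [hδb]
        group
  have hBsplit : ∀ j, (B (j + 1) : T) =
      (((List.range j).map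
        (fun k => adIter σ (k + 1) δ ^ Nat.choose (j + 1) (k + 2))).prod) * δ ^ (j + 1) := by
    intro j
    have h1 : B (j + 1) =
        (∏ k ∈ Finset.range j, b (k + 1) ^ Nat.choose (j + 1) (k + 2)) * b 0 ^ (j + 1) := by
      show (∏ k ∈ Finset.range (j + 1), b k ^ Nat.choose (j + 1) (k + 1)) = _
      rw [Finset.prod_range_succ' (fun k => b k ^ Nat.choose (j + 1) (k + 1))]
      simp
    have h2 : ((∏ k ∈ Finset.range j, b (k + 1) ^ Nat.choose (j + 1) (k + 2) : ↥N) : T)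
        = ((List.range j).map
            (fun k => adIter σ (k + 1) δ ^ Nat.choose (j + 1) (k + 2))).prod := by
      rw [← listprod_eq_finprod, SubmonoidClass.coe_list_prod, List.map_map]
      rfl
    rw [h1, Subgroup.coe_mul, h2]
    rfl
  refine ⟨?_, ?_⟩
  · intro i hi
    obtain ⟨j, rfl⟩ : ∃ j, i = j + 1 := ⟨i - 1, (Nat.succ_pred_eq_of_pos hi).symm⟩
    rw [main, hBsplit]
    simp [mul_assoc]
  · have hm : ∀ k, adIter σ k δ ∈ (⊤ : Subgroup T).lowerCentralSeries k := by
      intro k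
      induction k with
      | zero => simp [lowerCentralSeries]
      | succ k ih =>
          show ⁅σ, adIter σ k δ⁆ ∈ (⊤ : Subgroup T).lowerCentralSeries (k + 1)
          have : ⁅adIter σ k δ, σ⁆ ∈ (⊤ : Subgroup T).lowerCentralSeries (k + 1) := by
            rw [Subgroup.lowerCentralSeries_succ]
            exact Subgroup.commutator_mem_commutator ih (Subgroup.mem_top σ)
          simpa [commutatorElement_inv] using inv_mem this
    obtain ⟨m, hmp⟩ : ∃ m, p = m + 1 := ⟨p - 1, (Nat.succ_pred_eq_of_pos hp.pos).symm⟩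
    have hBp : B p = b m := by
      rw [hmp]
      show (∏ k ∈ Finset.range (m + 1), b k ^ Nat.choose (m + 1) (k + 1)) = _
      rw [Finset.prod_range_succ, Nat.choose_self, pow_one]
      have : ∀ k ∈ Finset.range m, b k ^ Nat.choose (m + 1) (k + 1) = 1 := by
        intro k hk
        have hk' : k + 1 < p := by
          rw [hmp]; exact Nat.succ_lt_succ (Finset.mem_range.mp hk)
        obtain ⟨t, ht⟩ := hp.dvd_choose_self (Nat.succ_ne_zero k) hk'
        have hbk : b k ^ p = 1 := Subtype.ext (by simpa using hexp _ (haN k))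
        have ht' : Nat.choose (m + 1) (k + 1) = p * t := by rw [← hmp]; exact ht
        rw [ht', pow_mul, hbk, one_pow]
      rw [Finset.prod_congr rfl this]
      simp
    refine ⟨(σ ^ p)⁻¹ * (b m : T) * σ ^ p, ?_, ?_⟩
    · have hmem : (b m : T) ∈ (⊤ : Subgroup T).lowerCentralSeries (p - 1) := by
        have : m = p - 1 := by omega
        rw [← this]; exact hm m
      have := (Subgroup.lowerCentralSeries_normal (⊤ : Subgroup T) (p - 1)).conj_mem _ hmem (σ ^ p)⁻¹
      simpa using this
    · rw [main, hBp]; group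
end

section
/- Let p be a prime, T a group with a normal abelian subgroup N of index p of exponent dividing p, and σ ∈ T \ N. Then the subgroup T^p generated by all p-th powers of elements of T equals ⟨σ^p⟩ · T_{(p)}, where T_{(p)} is the p-th term of the lower central series of T. -/
private theorem geom_sum_eq_pow_pred (p : ℕ) (hp : p.Prime) :
    ∑ k ∈ Finset.range p, (Polynomial.X : Polynomial (ZMod p)) ^ k
      = (Polynomial.X - 1) ^ (p - 1) := by
  haveI : Fact p.Prime := ⟨hp⟩
  have hX : (Polynomial.X - 1 : Polynomial (ZMod p)) ≠ 0 := by
    simpa using Polynomial.X_sub_C_ne_zero (1 : ZMod p)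
  apply mul_right_cancel₀ hX
  rw [geom_sum_mul, ← pow_succ, Nat.sub_add_cancel hp.one_le, sub_pow_char, one_pow]

open scoped commutatorElement

/-- Let `p` be a prime, `T` a group with a normal abelian subgroup `N` of
index `p` of exponent dividing `p`, and `σ ∈ T \ N`.  Then the subgroup `T^p` generated
by all `p`-th powers of elements of `T` equals `⟨σ^p⟩ · T_{(p)}`, where `T_{(p)}` is the
`p`-th term of the lower central series (`lowerCentralSeries T (p-1)` in Mathlib's
indexing, since `lowerCentralSeries T 0 = T`). -/
theorem stmt2 (p : ℕ) (hp : p.Prime) {T : Type*} [Group T]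
    (N : Subgroup T) [N.Normal] (hidx : N.index = p)
    (hab : ∀ x ∈ N, ∀ y ∈ N, Commute x y)
    (hexp : ∀ x ∈ N, x ^ p = 1)
    (σ : T) (hσ : σ ∉ N) :
    Subgroup.closure {x : T | ∃ t : T, x = t ^ p}
      = Subgroup.zpowers (σ ^ p) ⊔ (⊤ : Subgroup T).lowerCentralSeries (p - 1) := by
  haveI hF : Fact p.Prime := ⟨hp⟩
  haveI : NeZero p := ⟨hp.ne_zero⟩
  -- `N` is commutative
  letI cgN : CommGroup ↥N :=
    { (inferInstance : Group ↥N) with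
      mul_comm := fun a b => Subtype.ext (hab _ a.2 _ b.2) }
  -- σ ^ p ∈ N
  have hσp : σ ^ p ∈ N := by
    have := N.pow_index_mem σ; rwa [hidx] at this
  have hexpN : ∀ x : ↥N, x ^ p = 1 := by
    intro x
    ext
    push_cast
    exact hexp _ x.2
  -- ZMod p module structure on Additive N
  have modA : Module (ZMod p) (Additive ↥N) := AddCommGroup.zmodModule (by
    intro a
    simpa using congrArg Additive.ofMul (hexpN (Additive.toMul a)))
  letI := modA
  have hconjmem : ∀ x : T, x ∈ N → σ⁻¹ * x * σ ∈ N := by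
    intro x hx
    simpa using (inferInstance : N.Normal).conj_mem x hx σ⁻¹
  let c0 : ↥N →* ↥N :=
    { toFun := fun x => ⟨σ⁻¹ * ↑x * σ, hconjmem ↑x x.2⟩
      map_one' := by ext; simp
      map_mul' := fun x y => by ext; simp [mul_assoc] }
  let cE : Module.End (ZMod p) (Additive ↥N) :=
    (MonoidHom.toAdditive c0).toZModLinearMap p
  let g : Additive ↥N → T := fun a => ((Additive.toMul a : ↥N) : T)
  have hg_mul : ∀ a b, g (a + b) = g a * g b := fun _ _ => rfl
  have hg_neg : ∀ a, g (-a) = (g a)⁻¹ := fun _ => rfl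
  have hg_zero : g 0 = 1 := rfl
  have hg_mem : ∀ a, g a ∈ N := fun a => (Additive.toMul a).2
  have hg_inj : Function.Injective g := fun a b h =>
    (Equiv.injective Additive.toMul) (Subtype.coe_injective h)
  have hgc : ∀ a, g (cE a) = σ⁻¹ * g a * σ := fun a => rfl
  have hgpow : ∀ (e : ℕ) (a), g ((cE ^ e) a) = (σ⁻¹) ^ e * g a * σ ^ e := by
    intro e
    induction e with
    | zero => intro a; simp
    | succ e ih =>
      intro a
      have h1 : (cE ^ (e + 1)) a = (cE ^ e) (cE a) := by
        rw [pow_succ, Module.End.mul_apply]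
      rw [h1, ih, hgc, pow_succ, pow_succ]
      group
  -- cE ^ p = 1
  have hcp : cE ^ p = 1 := by
    apply LinearMap.ext
    intro a
    apply hg_inj
    rw [hgpow p a, Module.End.one_apply, inv_pow, mul_assoc,
      ← (hab _ hσp _ (hg_mem a)).eq, inv_mul_cancel_left]
  -- the operator F = cE - 1
  let F : Module.End (ZMod p) (Additive ↥N) := cE - 1
  have hCF : Commute cE F := (Commute.refl cE).sub_right (Commute.one_right cE)
  have hgF : ∀ b, g (F b) = (g b)⁻¹ * σ⁻¹ * g b * σ := by
    intro b
    have h1 : F b = -b + cE b := by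
      show cE b - b = -b + cE b
      abel
    rw [h1, hg_mul, hg_neg, hgc]
    group
  have hLCSsucc : ∀ k : ℕ,
      (⊤ : Subgroup T).lowerCentralSeries (k + 1) = ⁅(⊤ : Subgroup T).lowerCentralSeries k, (⊤ : Subgroup T)⁆ :=
    fun _ => rfl
  -- members of the lower central series
  have hG1 : ∀ (k : ℕ) (a), g ((F ^ k) a) ∈ (⊤ : Subgroup T).lowerCentralSeries k := by
    intro k
    induction k with
    | zero => intro a; simp
    | succ k ih =>
      intro a
      have h1 : (F ^ (k + 1)) a = F ((F ^ k) a) := by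
        rw [pow_succ', Module.End.mul_apply]
      rw [h1, hgF, hLCSsucc k]
      have h2 := Subgroup.commutator_mem_commutator
        (Subgroup.inv_mem _ (ih a)) (Subgroup.mem_top σ⁻¹)
      rwa [commutatorElement_def, inv_inv, inv_inv] at h2
  -- decomposition of elements
  have hdec : ∀ t : T, ∃ j : ℕ, j < p ∧ ∃ n : ↥N, t = σ ^ j * ↑n := by
    intro t
    have hQcard : Nat.card (T ⧸ N) = p := hidx
    haveI : Finite (T ⧸ N) :=
      Nat.finite_of_card_ne_zero (by rw [hQcard]; exact hp.ne_zero)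
    have hq1 : (σ : T ⧸ N) ≠ 1 := by
      simpa [QuotientGroup.eq_one_iff] using hσ
    have hqp : (σ : T ⧸ N) ^ p = 1 := by
      rw [← QuotientGroup.mk_pow]
      exact (QuotientGroup.eq_one_iff _).mpr hσp
    have hord : orderOf (σ : T ⧸ N) = p := orderOf_eq_prime hqp hq1
    have htop : Subgroup.zpowers (σ : T ⧸ N) = ⊤ :=
      Subgroup.eq_top_of_card_eq _ (by rw [Nat.card_zpowers, hord, hQcard])
    obtain ⟨i, hi⟩ : ∃ i : ℤ, (σ : T ⧸ N) ^ i = (t : T ⧸ N) := by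
      have : (t : T ⧸ N) ∈ Subgroup.zpowers (σ : T ⧸ N) := by
        rw [htop]; trivial
      exact this
    have h0 : 0 ≤ i % (p : ℤ) := Int.emod_nonneg i (by exact_mod_cast hp.ne_zero)
    have h1 : i % (p : ℤ) < p := Int.emod_lt_of_pos i (by exact_mod_cast hp.pos)
    refine ⟨(i % (p : ℤ)).toNat, by omega, ?_⟩
    have h2 : (σ : T ⧸ N) ^ ((i % (p : ℤ)).toNat : ℤ) = (σ : T ⧸ N) ^ i := by
      rw [Int.toNat_of_nonneg h0]
      have h3 := zpow_mod_orderOf (σ : T ⧸ N) i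
      rwa [hord] at h3
    have h4 : ((σ ^ (i % (p : ℤ)).toNat : T) : T ⧸ N) = (t : T ⧸ N) := by
      rw [QuotientGroup.mk_pow, ← zpow_natCast, h2, hi]
    have h5 : (σ ^ (i % (p : ℤ)).toNat)⁻¹ * t ∈ N := (QuotientGroup.eq).mp h4
    exact ⟨⟨_, h5⟩, by simp⟩
  -- conjugation of N-elements is a power of cE
  have hconjA : ∀ t : T, ∃ m : ℕ, ∀ a, t * g a * t⁻¹ = g ((cE ^ m) a) := by
    intro t
    obtain ⟨j, hj, n, rfl⟩ := hdec t
    refine ⟨j * (p - 1), fun a => ?_⟩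
    have key : σ ^ (j * (p - 1) + j) * g a = g a * σ ^ (j * (p - 1) + j) := by
      have hjp : j * (p - 1) + j = p * j := by
        have h6 : p - 1 + 1 = p := Nat.succ_pred_eq_of_pos hp.pos
        calc j * (p - 1) + j = j * ((p - 1) + 1) := by ring
          _ = p * j := by rw [h6]; ring
      have hmem : σ ^ (j * (p - 1) + j) ∈ N := by
        rw [hjp, pow_mul]; exact Subgroup.pow_mem N hσp j
      exact (hab _ hmem _ (hg_mem a)).eq
    have h1 : (σ ^ j * ↑n) * g a * (σ ^ j * ↑n)⁻¹ = σ ^ j * g a * (σ ^ j)⁻¹ := by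
      have h2 : (↑n : T) * g a * (↑n : T)⁻¹ = g a := by
        rw [(hab _ n.2 _ (hg_mem a)).eq, mul_inv_cancel_right]
      rw [mul_inv_rev]
      calc σ ^ j * ↑n * g a * ((↑n : T)⁻¹ * (σ ^ j)⁻¹)
          = σ ^ j * ((↑n : T) * g a * (↑n : T)⁻¹) * (σ ^ j)⁻¹ := by group
        _ = σ ^ j * g a * (σ ^ j)⁻¹ := by rw [h2]
    rw [h1, hgpow]
    calc σ ^ j * g a * (σ ^ j)⁻¹
        = (σ ^ (j * (p - 1)))⁻¹ * (σ ^ (j * (p - 1) + j) * g a) * (σ ^ j)⁻¹ := by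
          rw [pow_add]; group
      _ = (σ ^ (j * (p - 1)))⁻¹ * (g a * σ ^ (j * (p - 1) + j)) * (σ ^ j)⁻¹ := by rw [key]
      _ = (σ⁻¹) ^ (j * (p - 1)) * g a * σ ^ (j * (p - 1)) := by
          rw [pow_add, inv_pow]; group
  -- the subgroups M k
  let M : ℕ → Subgroup T := fun k => Subgroup.closure (Set.range fun a => g ((F ^ k) a))
  have hcomm_pow : ∀ m k : ℕ, (cE ^ m) * (F ^ k) = (F ^ k) * (cE ^ m) := fun m k =>
    (hCF.pow_pow m k)
  have hMnormal : ∀ k, (M k).Normal := by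
    intro k
    constructor
    intro x hx t
    induction hx using Subgroup.closure_induction with
    | mem x hx =>
      obtain ⟨a, rfl⟩ := hx
      obtain ⟨m, hm⟩ := hconjA t
      rw [hm]
      have h1 : (cE ^ m) ((F ^ k) a) = (F ^ k) ((cE ^ m) a) := by
        rw [← Module.End.mul_apply, hcomm_pow, Module.End.mul_apply]
      rw [h1]
      exact Subgroup.subset_closure ⟨_, rfl⟩
    | one => simpa using one_mem (M k)
    | mul x y hx hy ihx ihy =>
      have h := mul_mem ihx ihy
      have e : (t * x * t⁻¹) * (t * y * t⁻¹) = t * (x * y) * t⁻¹ := by group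
      rwa [e] at h
    | inv x hx ih =>
      have h := inv_mem ih
      have e : (t * x * t⁻¹)⁻¹ = t * x⁻¹ * t⁻¹ := by group
      rwa [e] at h
  -- commutator step
  have hstep : ∀ (k : ℕ) (t : T), ∀ y ∈ M k, ⁅y, t⁆ ∈ M (k + 1) := by
    intro k t y hy
    induction hy using Subgroup.closure_induction with
    | mem y hy =>
      obtain ⟨a, rfl⟩ := hy
      obtain ⟨m, hm⟩ := hconjA t
      set b := (F ^ k) a with hb
      have h1 : ⁅g b, t⁆ = g (b + (cE ^ m) (-b)) := by
        rw [hg_mul, ← hm, hg_neg, commutatorElement_def]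
        group
      have hG : Commute F (∑ i ∈ Finset.range m, cE ^ i) :=
        Commute.sum_right _ _ _ fun i _ => (hCF.symm.pow_right i)
      have hFdef : F = cE - 1 := rfl
      have h1m : Commute (F ^ k) (1 - cE ^ m) :=
        (Commute.one_right (F ^ k)).sub_right (hCF.symm.pow_pow k m)
      have hring : (1 - cE ^ m) * F ^ k
          = -(F ^ (k + 1) * (∑ i ∈ Finset.range m, cE ^ i)) := by
        have hgs : (∑ i ∈ Finset.range m, cE ^ i) * F = cE ^ m - 1 := by
          rw [hFdef]; exact geom_sum_mul cE m
        calc (1 - cE ^ m) * F ^ k = F ^ k * (1 - cE ^ m) := h1m.symm.eq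
          _ = -(F ^ k * (cE ^ m - 1)) := by simp only [mul_sub, mul_one, neg_sub]
          _ = -(F ^ k * ((∑ i ∈ Finset.range m, cE ^ i) * F)) := by rw [hgs]
          _ = -(F ^ k * (F * (∑ i ∈ Finset.range m, cE ^ i))) := by rw [hG.eq]
          _ = -(F ^ (k + 1) * (∑ i ∈ Finset.range m, cE ^ i)) := by
            rw [pow_succ, mul_assoc]
      have h2 : b + (cE ^ m) (-b)
          = (F ^ (k + 1)) (-((∑ i ∈ Finset.range m, cE ^ i) a)) := by
        have h3 := congrArg (fun φ : Module.End (ZMod p) (Additive ↥N) => φ a) hring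
        simp only [Module.End.mul_apply, LinearMap.sub_apply, Module.End.one_apply,
          LinearMap.neg_apply] at h3
        rw [map_neg (cE ^ m), ← sub_eq_add_neg, hb, h3, ← map_neg (F ^ (k + 1))]
      rw [h1, h2]
      exact Subgroup.subset_closure ⟨_, rfl⟩
    | one => simpa using one_mem (M (k + 1))
    | mul x y hx hy ihx ihy =>
      have e : ⁅x * y, t⁆ = x * ⁅y, t⁆ * x⁻¹ * ⁅x, t⁆ := by
        simp only [commutatorElement_def]; group
      rw [e]
      exact mul_mem ((hMnormal (k + 1)).conj_mem _ ihy x) ihx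
    | inv x hx ih =>
      have e : ⁅x⁻¹, t⁆ = x⁻¹ * ⁅x, t⁆⁻¹ * x := by
        simp only [commutatorElement_def]; group
      rw [e]
      have h := (hMnormal (k + 1)).conj_mem _ (inv_mem ih) x⁻¹
      simpa using h
  -- base case: LCS 1 ≤ M 1
  have hbase : (⊤ : Subgroup T).lowerCentralSeries 1 ≤ M 1 := by
    have h0 : (⊤ : Subgroup T).lowerCentralSeries 1 = ⁅(⊤ : Subgroup T), ⊤⁆ := by
      rw [hLCSsucc 0, Subgroup.lowerCentralSeries_zero]
    rw [h0]
    apply Subgroup.commutator_le.mpr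
    intro s _ t _
    obtain ⟨i, _, m, rfl⟩ := hdec s
    have e1 : ⁅σ ^ i * ↑m, t⁆ = σ ^ i * ⁅(↑m : T), t⁆ * (σ ^ i)⁻¹ * ⁅σ ^ i, t⁆ := by
      simp only [commutatorElement_def]; group
    rw [e1]
    have hmM : ∀ n : ↥N, (↑n : T) ∈ M 0 := fun n =>
      Subgroup.subset_closure ⟨Additive.ofMul n, rfl⟩
    have h2 : ⁅(↑m : T), t⁆ ∈ M 1 := hstep 0 t _ (hmM m)
    have h3 : ⁅σ ^ i, t⁆ ∈ M 1 := by
      obtain ⟨j, _, n, rfl⟩ := hdec t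
      have e2 : ⁅σ ^ i, σ ^ j * ↑n⁆
          = ⁅σ ^ i, σ ^ j⁆ * (σ ^ j * ⁅σ ^ i, (↑n : T)⁆ * (σ ^ j)⁻¹) := by
        simp only [commutatorElement_def]; group
      rw [e2, commutatorElement_eq_one_iff_commute.mpr
        ((Commute.refl σ).pow_pow i j), one_mul]
      have h4 : ⁅σ ^ i, (↑n : T)⁆ ∈ M 1 := by
        have h5 : ⁅(↑n : T), σ ^ i⁆ ∈ M 1 := hstep 0 _ _ (hmM n)
        rw [← commutatorElement_inv]
        exact inv_mem h5
      exact (hMnormal 1).conj_mem _ h4 (σ ^ j)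
    exact mul_mem ((hMnormal 1).conj_mem _ h2 (σ ^ i)) h3
  -- LCS (k+1) ≤ M (k+1)
  have hLCS : ∀ k : ℕ, (⊤ : Subgroup T).lowerCentralSeries (k + 1) ≤ M (k + 1) := by
    intro k
    induction k with
    | zero => exact hbase
    | succ k ih =>
      rw [hLCSsucc (k + 1)]
      apply Subgroup.commutator_le.mpr
      intro y hy t _
      exact hstep (k + 1) t y (ih hy)
  -- power formula
  have hpowf : ∀ (j : ℕ) (a) (e : ℕ),
      (σ ^ j * g a) ^ e = σ ^ (j * e) * g (∑ k ∈ Finset.range e, (cE ^ (j * k)) a) := by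
    intro j a e
    induction e with
    | zero => simp [hg_zero]
    | succ e ih =>
      rw [pow_succ, ih]
      have hswap : g (∑ k ∈ Finset.range e, (cE ^ (j * k)) a) * σ ^ j
          = σ ^ j * g ((cE ^ j) (∑ k ∈ Finset.range e, (cE ^ (j * k)) a)) := by
        rw [hgpow]; group
      have hsum : (cE ^ j) (∑ k ∈ Finset.range e, (cE ^ (j * k)) a) + a
          = ∑ k ∈ Finset.range (e + 1), (cE ^ (j * k)) a := by
        rw [Finset.sum_range_succ']
        simp only [Nat.mul_zero, pow_zero, Module.End.one_apply]
        congr 1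
        rw [map_sum]
        apply Finset.sum_congr rfl
        intro k _
        rw [← Module.End.mul_apply, ← pow_add]
        congr 2
        ring
      calc σ ^ (j * e) * g (∑ k ∈ Finset.range e, (cE ^ (j * k)) a) * (σ ^ j * g a)
          = σ ^ (j * e) * (g (∑ k ∈ Finset.range e, (cE ^ (j * k)) a) * σ ^ j) * g a := by
            group
        _ = σ ^ (j * e) * (σ ^ j * g ((cE ^ j) (∑ k ∈ Finset.range e, (cE ^ (j * k)) a)))
              * g a := by rw [hswap]
        _ = σ ^ (j * (e + 1))
              * g ((cE ^ j) (∑ k ∈ Finset.range e, (cE ^ (j * k)) a) + a) := by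
            rw [hg_mul]
            have he : j * (e + 1) = j * e + j := by ring
            rw [he, pow_add]
            group
        _ = σ ^ (j * (e + 1)) * g (∑ k ∈ Finset.range (e + 1), (cE ^ (j * k)) a) := by
            rw [hsum]
  -- the geometric sum identity
  have hSS : (∑ k ∈ Finset.range p, cE ^ k) = F ^ (p - 1) := by
    have hpoly := geom_sum_eq_pow_pred p hp
    have h := congrArg (Polynomial.aeval cE) hpoly
    simpa [map_sum, map_pow, map_sub, Polynomial.aeval_X, map_one] using h
  -- reindexing for j coprime to p
  have hmod : ∀ e : ℕ, cE ^ e = cE ^ (e % p) := by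
    intro e
    conv_lhs => rw [← Nat.div_add_mod e p]
    rw [pow_add, pow_mul, hcp, one_pow, one_mul]
  have hrange : ∀ f : ZMod p → Module.End (ZMod p) (Additive ↥N),
      ∑ k ∈ Finset.range p, f (k : ZMod p) = ∑ z : ZMod p, f z := by
    intro f
    apply Finset.sum_nbij' (fun k => ((k : ℕ) : ZMod p)) (fun z => z.val)
    · intro a _; exact Finset.mem_univ _
    · intro z _; exact Finset.mem_range.mpr (ZMod.val_lt z)
    · intro a ha; exact ZMod.val_cast_of_lt (Finset.mem_range.mp ha)
    · intro z _; exact ZMod.natCast_zmod_val z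
    · intro a _; rfl
  have hSj : ∀ j : ℕ, ¬ (p ∣ j) → (∑ k ∈ Finset.range p, cE ^ (j * k)) = F ^ (p - 1) := by
    intro j hj
    have hjz : ((j : ℕ) : ZMod p) ≠ 0 := by
      rwa [Ne, ZMod.natCast_eq_zero_iff]
    have h1 : ∀ k : ℕ, cE ^ (j * k) = cE ^ ((((j : ℕ) : ZMod p) * ((k : ℕ) : ZMod p)).val) := by
      intro k
      rw [hmod, ← Nat.cast_mul, ZMod.val_natCast]
    calc (∑ k ∈ Finset.range p, cE ^ (j * k))
        = ∑ k ∈ Finset.range p, cE ^ ((((j : ℕ) : ZMod p) * ((k : ℕ) : ZMod p)).val) := by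
          exact Finset.sum_congr rfl fun k _ => h1 k
      _ = ∑ z : ZMod p, cE ^ ((((j : ℕ) : ZMod p) * z).val) :=
          hrange (fun z => cE ^ ((((j : ℕ) : ZMod p) * z).val))
      _ = ∑ z : ZMod p, cE ^ (z.val) :=
          Fintype.sum_bijective _ (mulLeft_bijective₀ ((j : ℕ) : ZMod p) hjz)
            _ _ (fun z => rfl)
      _ = ∑ k ∈ Finset.range p, cE ^ (((k : ℕ) : ZMod p).val) :=
          (hrange (fun z => cE ^ z.val)).symm
      _ = ∑ k ∈ Finset.range p, cE ^ k := by
          apply Finset.sum_congr rfl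
          intro k _
          rw [ZMod.val_natCast, ← hmod]
      _ = F ^ (p - 1) := hSS
  -- M (p-1) is contained in the closure of p-th powers
  have hM_L : M (p - 1) ≤ Subgroup.closure {x : T | ∃ t : T, x = t ^ p} := by
    apply (Subgroup.closure_le _).mpr
    rintro x ⟨a, rfl⟩
    show g ((F ^ (p - 1)) a) ∈ Subgroup.closure {x : T | ∃ t : T, x = t ^ p}
    have h1 := hpowf 1 a p
    simp only [pow_one, one_mul] at h1
    have h2 : g ((F ^ (p - 1)) a) = (σ⁻¹) ^ p * (σ * g a) ^ p := by
      rw [h1, ← LinearMap.sum_apply, hSS, inv_pow]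
      group
    rw [h2]
    exact mul_mem (Subgroup.subset_closure ⟨σ⁻¹, rfl⟩)
      (Subgroup.subset_closure ⟨σ * g a, rfl⟩)
  -- main proof
  apply le_antisymm
  · apply (Subgroup.closure_le _).mpr
    rintro x ⟨t, rfl⟩
    obtain ⟨j, hjp, n, rfl⟩ := hdec t
    by_cases hj : p ∣ j
    · have hσj : σ ^ j ∈ N := by
        obtain ⟨c, rfl⟩ := hj
        rw [pow_mul]
        exact Subgroup.pow_mem N hσp c
      have hmem : σ ^ j * ↑n ∈ N := mul_mem hσj n.2
      rw [hexp _ hmem]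
      exact one_mem _
    · have h1 := hpowf j (Additive.ofMul n) p
      have h2 : (σ ^ j * (↑n : T)) ^ p
          = σ ^ (j * p) * g ((F ^ (p - 1)) (Additive.ofMul n)) := by
        have : (↑n : T) = g (Additive.ofMul n) := rfl
        rw [this, h1, ← LinearMap.sum_apply, hSj j hj]
      rw [h2]
      apply mul_mem
      · apply Subgroup.mem_sup_left
        rw [mul_comm, pow_mul]
        exact Subgroup.pow_mem _ (Subgroup.mem_zpowers _) j
      · exact Subgroup.mem_sup_right (hG1 (p - 1) _)
  · apply sup_le
    · rw [Subgroup.zpowers_le]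
      exact Subgroup.subset_closure ⟨σ, rfl⟩
    · have hp2 : p - 1 = (p - 2) + 1 := by have := hp.two_le; omega
      calc (⊤ : Subgroup T).lowerCentralSeries (p - 1) ≤ M (p - 1) := by
            rw [hp2]; exact hLCS (p - 2)
        _ ≤ _ := hM_L
end

section
/- Let p be a prime, T a group with a normal abelian subgroup N of index p of exponent dividing p. Then T_{(p+1)} = 1, i.e. T is nilpotent of class at most p. -/
section Generic
variable {A : Type*} [AddCommGroup A]

lemma end_mul_apply (f g : AddMonoid.End A) (x : A) : (f * g) x = f (g x) := rfl

lemma end_sum_apply {ι : Type*} (s : Finset ι) (f : ι → AddMonoid.End A) (x : A) :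
    (∑ i ∈ s, f i) x = ∑ i ∈ s, f i x := by
  classical
  induction s using Finset.induction with
  | empty => rfl
  | insert _ _ hns ih => rw [Finset.sum_insert hns, Finset.sum_insert hns, ← ih]; rfl

lemma end_sub_pow_range (σ : AddMonoid.End A) (j k : ℕ) (y : A) :
    ∃ z, ((σ - 1) ^ (k + 1)) z
      = ((σ - 1) ^ k) y - (σ ^ j) (((σ - 1) ^ k) y) := by
  set ψ := σ - 1 with hψd
  refine ⟨-((∑ l ∈ Finset.range j, σ ^ l) y), ?_⟩
  have hc : Commute σ ψ := (Commute.refl σ).sub_right (Commute.one_right σ)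
  have hcs : Commute (ψ ^ (k + 1)) (∑ l ∈ Finset.range j, σ ^ l) :=
    Commute.sum_right _ _ _ fun l _ => (hc.symm.pow_pow _ _)
  have hgeo : (∑ l ∈ Finset.range j, σ ^ l) * ψ = σ ^ j - 1 := geom_sum_mul σ j
  calc (ψ ^ (k + 1)) (-((∑ l ∈ Finset.range j, σ ^ l) y))
      = -((ψ ^ (k + 1) * ∑ l ∈ Finset.range j, σ ^ l) y) := by
        rw [map_neg, end_mul_apply]
    _ = -(((∑ l ∈ Finset.range j, σ ^ l) * ψ ^ (k + 1)) y) := by rw [hcs.eq]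
    _ = -(((∑ l ∈ Finset.range j, σ ^ l) * (ψ * ψ ^ k)) y) := by rw [← pow_succ']
    _ = -((((∑ l ∈ Finset.range j, σ ^ l) * ψ) * ψ ^ k) y) := by rw [mul_assoc]
    _ = -(((σ ^ j - 1) * ψ ^ k) y) := by rw [hgeo]
    _ = -((σ ^ j) ((ψ ^ k) y) - (ψ ^ k) y) := by
        rw [sub_mul, one_mul]; rfl
    _ = (ψ ^ k) y - (σ ^ j) ((ψ ^ k) y) := neg_sub _ _

lemma end_sub_pow_prime (p : ℕ) (hp : p.Prime) (σ : AddMonoid.End A)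
    (hσp : σ ^ p = 1) (hps : ∀ x : A, p • x = 0) : (σ - 1) ^ p = 0 := by
  have hc : Commute σ (-1 : AddMonoid.End A) := (Commute.one_right σ).neg_right
  refine DFunLike.ext _ _ fun x => ?_
  rw [sub_eq_add_neg, hc.add_pow p, end_sum_apply, Finset.sum_range_succ]
  have hmid : ∀ b ∈ Finset.range p, b ≠ 0 →
      (σ ^ b * (-1) ^ (p - b) * ((p.choose b : ℕ) : AddMonoid.End A)) x = 0 := by
    intro b hb hb0
    obtain ⟨c, hcc⟩ := hp.dvd_choose_self hb0 (Finset.mem_range.mp hb)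
    rw [end_mul_apply, end_mul_apply, AddMonoid.End.natCast_apply, hcc, mul_comm p c,
      mul_nsmul, hps]
    simp
  rw [Finset.sum_eq_single_of_mem 0 (Finset.mem_range.mpr hp.pos) hmid]
  simp only [pow_zero, one_mul, mul_one, Nat.choose_zero_right, Nat.choose_self, Nat.cast_one,
    Nat.sub_zero, Nat.sub_self, hσp, AddMonoid.End.one_apply]
  rcases hp.eq_two_or_odd' with h2 | hodd
  · subst h2
    rw [neg_one_sq, AddMonoid.End.one_apply]
    have := hps x
    rwa [two_nsmul] at this
  · rw [hodd.neg_one_pow]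
    show -x + x = 0
    exact neg_add_cancel x

end Generic

open scoped IsMulCommutative commutatorElement

section Aux

variable {T : Type*} [Group T] {N : Subgroup T} [N.Normal] [IsMulCommutative N]

/-- Conjugation by `t` as an additive endomorphism of `Additive ↥N`. -/
def sigmaAdd (N : Subgroup T) [N.Normal] [IsMulCommutative N] (t : T) :
    AddMonoid.End (Additive ↥N) :=
  AddMonoidHom.mk' (fun x => Additive.ofMul (MulAut.conjNormal t x.toMul))
    (fun a b => congrArg Additive.ofMul (map_mul (MulAut.conjNormal t) a.toMul b.toMul))

lemma sigmaAdd_pow_apply (t : T) (j : ℕ) (x : Additive ↥N) :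
    (sigmaAdd N t ^ j) x = Additive.ofMul ((MulAut.conjNormal t ^ j) x.toMul) := by
  induction j generalizing x with
  | zero => rfl
  | succ n ih =>
      rw [pow_succ, end_mul_apply, ih, pow_succ, MulAut.mul_apply]
      rfl

lemma coe_conjNormal_pow (t : T) (j : ℕ) (m : ↥N) :
    (((MulAut.conjNormal t ^ j) m : ↥N) : T) = t ^ j * ↑m * (t ^ j)⁻¹ := by
  rw [← map_pow, MulAut.conjNormal_apply]

/-- The subgroup of `T` corresponding to the range of `(σ - 1)^k`. -/
def SS (N : Subgroup T) [N.Normal] [IsMulCommutative N] (t : T) (k : ℕ) : Subgroup T :=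
  (AddSubgroup.toSubgroup' (((sigmaAdd N t - 1) ^ k : AddMonoid.End (Additive ↥N)) :
    Additive ↥N →+ Additive ↥N).range).map N.subtype

lemma mem_SS {t : T} {k : ℕ} {g : T} :
    g ∈ SS N t k ↔ ∃ m : ↥N, (∃ y, ((sigmaAdd N t - 1) ^ k) y = Additive.ofMul m) ∧ ↑m = g := by
  rw [SS, Subgroup.mem_map]
  constructor
  · rintro ⟨m, hm, h⟩; exact ⟨m, hm, h⟩
  · rintro ⟨m, hm, h⟩; exact ⟨m, hm, h⟩

lemma N_le_SS (t : T) {n : T} (hn : n ∈ N) : n ∈ SS N t 0 :=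
  mem_SS.mpr ⟨⟨n, hn⟩, ⟨Additive.ofMul ⟨n, hn⟩, rfl⟩, rfl⟩

lemma SS_mono (t : T) (k : ℕ) : SS N t (k + 1) ≤ SS N t k := by
  intro g hg
  obtain ⟨m, ⟨y, hy⟩, rfl⟩ := mem_SS.mp hg
  refine mem_SS.mpr ⟨m, ⟨(sigmaAdd N t - 1) y, ?_⟩, rfl⟩
  rw [← end_mul_apply, ← pow_succ, hy]

/-- The key commutator step. -/
lemma key_step (t : T)
    (hd : ∀ g : T, ∃ (j : ℕ) (a : T), a ∈ N ∧ g = t ^ j * a)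
    (k : ℕ) : ∀ n ∈ SS N t k, ∀ g : T, ⁅n, g⁆ ∈ SS N t (k + 1) := by
  intro n hn g
  obtain ⟨m, ⟨y, hy⟩, rfl⟩ := mem_SS.mp hn
  obtain ⟨j, a, ha, rfl⟩ := hd g
  have hcomm : a * (↑m)⁻¹ * a⁻¹ = ((↑m)⁻¹ : T) := by
    have h := Subgroup.mul_comm_of_mem_isMulCommutative N ha (inv_mem m.2)
    rw [h]; group
  have hcalc : ⁅(↑m : T), t ^ j * a⁆ = ↑(m * (((MulAut.conjNormal t ^ j) m))⁻¹) := by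
    push_cast
    rw [coe_conjNormal_pow]
    have h1 : ⁅(↑m : T), t ^ j * a⁆
        = ↑m * t ^ j * (a * (↑m)⁻¹ * a⁻¹) * (t ^ j)⁻¹ := by group
    rw [h1, hcomm]
    group
  rw [hcalc]
  obtain ⟨z, hz⟩ := end_sub_pow_range (sigmaAdd N t) j k y
  refine mem_SS.mpr ⟨m * ((MulAut.conjNormal t ^ j) m)⁻¹, ⟨z, ?_⟩, rfl⟩
  rw [hz, hy]
  have h2 : Additive.ofMul (m * ((MulAut.conjNormal t ^ j) m)⁻¹)
      = Additive.ofMul m - Additive.ofMul ((MulAut.conjNormal t ^ j) m) := by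
    rw [ofMul_mul, ofMul_inv, sub_eq_add_neg]
  rw [h2, sigmaAdd_pow_apply]
  rfl

lemma SS_normal (t : T)
    (hd : ∀ g : T, ∃ (j : ℕ) (a : T), a ∈ N ∧ g = t ^ j * a)
    (k : ℕ) : (SS N t k).Normal := by
  constructor
  intro n hn g
  have h1 : ⁅n, g⁆ ∈ SS N t (k + 1) := key_step t hd k n hn g
  have h2 : ⁅g, n⁆ ∈ SS N t (k + 1) := by
    rw [← commutatorElement_inv]; exact inv_mem h1
  have h3 : g * n * g⁻¹ = ⁅g, n⁆ * n := by group
  rw [h3]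
  exact mul_mem (SS_mono t k h2) hn

lemma sigmaAdd_pow_p_eq_one (t : T) (p : ℕ) (htp : t ^ p ∈ N) :
    sigmaAdd N t ^ p = 1 := by
  refine DFunLike.ext _ _ fun x => ?_
  rw [sigmaAdd_pow_apply]
  have h1 : (MulAut.conjNormal t ^ p) x.toMul = x.toMul := by
    ext
    rw [coe_conjNormal_pow]
    have h := Subgroup.mul_comm_of_mem_isMulCommutative N htp x.toMul.2
    rw [h]; group
  rw [h1]
  rfl

lemma nsmul_p_eq_zero (p : ℕ) (hexp : ∀ x ∈ N, x ^ p = 1) (x : Additive ↥N) :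
    p • x = 0 := by
  have h1 : x.toMul ^ p = 1 := by
    ext
    push_cast
    exact hexp _ x.toMul.2
  have h2 : Additive.ofMul (x.toMul ^ p) = p • Additive.ofMul x.toMul := ofMul_pow p x.toMul
  rw [h1] at h2
  exact h2.symm

end Aux

/-- Let `p` be a prime, `T` a group with a normal abelian subgroup `N` of
index `p` of exponent dividing `p`.  Then `T_{(p+1)} = 1`, i.e. `T` is nilpotent of
class at most `p`.  In Mathlib's indexing `T_{(p+1)} = lowerCentralSeries T p`. -/
theorem stmt3 (p : ℕ) (hp : p.Prime) {T : Type*} [Group T]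
    (N : Subgroup T) [N.Normal] (hidx : N.index = p)
    (hab : ∀ x ∈ N, ∀ y ∈ N, Commute x y)
    (hexp : ∀ x ∈ N, x ^ p = 1) :
    (⊤ : Subgroup T).lowerCentralSeries p = ⊥ := by
  haveI hNc : IsMulCommutative N := ⟨⟨fun a b => Subtype.ext (hab a a.2 b b.2)⟩⟩
  -- find t outside N
  have hNtop : N ≠ ⊤ := by
    intro h
    rw [h, Subgroup.index_top] at hidx
    exact hp.ne_one hidx.symm
  obtain ⟨t, ht⟩ : ∃ t, t ∉ N := by
    by_contra h
    push_neg at h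
    exact hNtop ((Subgroup.eq_top_iff' N).mpr h)
  set π := QuotientGroup.mk' N with hπ
  have hcard : Nat.card (T ⧸ N) = p := hidx
  have hπt : π t ≠ 1 := by
    rw [Ne, QuotientGroup.mk'_apply, QuotientGroup.eq_one_iff]
    exact ht
  haveI : Finite (T ⧸ N) := Nat.finite_of_card_ne_zero (by rw [hcard]; exact hp.pos.ne')
  have horder : orderOf (π t) = p := by
    have h1 : orderOf (π t) ∣ p := hcard ▸ orderOf_dvd_natCard (π t)
    rcases (Nat.Prime.eq_one_or_self_of_dvd hp _ h1) with h | h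
    · exact absurd (orderOf_eq_one_iff.mp h) hπt
    · exact h
  have htp : t ^ p ∈ N := by
    rw [← QuotientGroup.eq_one_iff, ← QuotientGroup.mk'_apply, map_pow, ← horder,
      pow_orderOf_eq_one]
  have hgen : Subgroup.zpowers (π t) = ⊤ := by
    apply Subgroup.eq_top_of_card_eq
    rw [Nat.card_zpowers, horder, hcard]
  have hd : ∀ g : T, ∃ (j : ℕ) (a : T), a ∈ N ∧ g = t ^ j * a := by
    intro g
    have hmem : π g ∈ Subgroup.zpowers (π t) := hgen ▸ Subgroup.mem_top _
    obtain ⟨i, hi⟩ := Subgroup.mem_zpowers_iff.mp hmem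
    set j := (i % (p : ℤ)).toNat with hj
    have hp0 : (0 : ℤ) < (p : ℤ) := by exact_mod_cast hp.pos
    have hjeq : ((j : ℤ)) = i % (p : ℤ) := Int.toNat_of_nonneg (Int.emod_nonneg i hp0.ne')
    have hπtp : (π t) ^ (p : ℤ) = 1 := by
      rw [zpow_natCast, ← horder, pow_orderOf_eq_one]
    have hij : (π t) ^ (j : ℤ) = π g := by
      rw [hjeq, ← hi]
      conv_rhs => rw [← Int.emod_add_mul_ediv i (p : ℤ)]
      rw [zpow_add, zpow_mul, hπtp, one_zpow, mul_one]
    refine ⟨j, (t ^ j)⁻¹ * g, ?_, by group⟩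
    rw [← QuotientGroup.eq_one_iff, ← QuotientGroup.mk'_apply]
    have : π ((t ^ j)⁻¹ * g) = (π t ^ j)⁻¹ * π g := by
      rw [map_mul, map_inv, map_pow]
    rw [this, ← zpow_natCast, hij, inv_mul_cancel]
  -- the main induction
  have hψp : (sigmaAdd N t - 1) ^ p = 0 :=
    end_sub_pow_prime p hp (sigmaAdd N t) (sigmaAdd_pow_p_eq_one t p htp)
      (nsmul_p_eq_zero p hexp)
  have hSSp : SS N t p ≤ ⊥ := by
    intro g hg
    obtain ⟨m, ⟨y, hy⟩, rfl⟩ := mem_SS.mp hg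
    rw [hψp] at hy
    have : m = 1 := by
      have h0 : Additive.ofMul m = 0 := hy.symm
      exact congrArg Additive.toMul h0
    rw [this]
    simp
  haveI hnormal := SS_normal t hd
  have main : ∀ k : ℕ, (⊤ : Subgroup T).lowerCentralSeries (k + 1) ≤ SS N t (k + 1) := by
    intro k
    induction k with
    | zero =>
        show (⊤ : Subgroup T).lowerCentralSeries 1 ≤ SS N t 1
        rw [lowerCentralSeries_succ]
        refine (Subgroup.closure_le _).mpr ?_
        rintro x ⟨g, -, h, -, rfl⟩
        show ⁅g, h⁆ ∈ SS N t 1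
        obtain ⟨i, a, ha, rfl⟩ := hd g
        obtain ⟨j, b, hb, rfl⟩ := hd h
        have h1 : ⁅(a : T), t ^ j * b⁆ ∈ SS N t 1 :=
          key_step t hd 0 a (N_le_SS t ha) _
        have h2 : ⁅t ^ i, (b : T)⁆ ∈ SS N t 1 := by
          rw [← commutatorElement_inv]
          exact inv_mem (key_step t hd 0 b (N_le_SS t hb) _)
        have h3 : ⁅t ^ i, t ^ j * b⁆ = t ^ j * ⁅t ^ i, (b : T)⁆ * (t ^ j)⁻¹ := by
          have h4 : ⁅t ^ i, t ^ j * b⁆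
              = ⁅t ^ i, t ^ j⁆ * (t ^ j * ⁅t ^ i, (b : T)⁆ * (t ^ j)⁻¹) := by group
          rw [h4, (Commute.pow_pow_self t i j).commutator_eq, one_mul]
        have hmain_id : ⁅t ^ i * a, t ^ j * b⁆
            = (t ^ i * ⁅(a : T), t ^ j * b⁆ * (t ^ i)⁻¹) * ⁅t ^ i, t ^ j * b⁆ := by
          group
        rw [hmain_id, h3]
        exact mul_mem ((hnormal 1).conj_mem _ h1 _) ((hnormal 1).conj_mem _ h2 _)
    | succ n ih =>
        rw [lowerCentralSeries_succ]
        refine (Subgroup.closure_le _).mpr ?_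
        rintro x ⟨g, hg, h, -, rfl⟩
        exact key_step t hd (n + 1) g (ih hg) h
  have hfin : (⊤ : Subgroup T).lowerCentralSeries p ≤ ⊥ := by
    have h1 := main (p - 1)
    rw [Nat.sub_add_cancel hp.one_le] at h1
    exact le_trans h1 hSSp
  exact le_bot_iff.mp hfin
end

section
/- Let p be a prime, G a group of order p with generator g acting on an abelian group N written additively as an F_p[G]-module, and let T = N ⋊ G be the semidirect product. Then for every n ≥ 2, the n-th term of the lower central series T_{(n)} equals the image of N under (g-1)^{n-1}, where (g-1) denotes the endomorphism x ↦ g·x − x of N. -/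
namespace Stmt4Aux

open scoped commutatorElement

variable {p : ℕ} {N : Type*} [CommGroup N] (φ : Multiplicative (ZMod p) →* MulAut N)

/-- the endomorphism `x ↦ g•x * x⁻¹` -/
def f : N → N := fun x => φ (Multiplicative.ofAdd (1 : ZMod p)) x * x⁻¹

lemma f_mul (x y : N) : f φ (x * y) = f φ x * f φ y := by
  simp only [f, map_mul, mul_inv]
  simp [mul_comm, mul_left_comm, mul_assoc]

lemma f_act (s : Multiplicative (ZMod p)) (x : N) : φ s (f φ x) = f φ (φ s x) := by
  simp only [f, map_mul, map_inv]
  rw [← MulAut.mul_apply, ← map_mul, mul_comm s, map_mul, MulAut.mul_apply]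

lemma iter_mul (k : ℕ) (x y : N) : (f φ)^[k] (x * y) = (f φ)^[k] x * (f φ)^[k] y := by
  induction k generalizing x y with
  | zero => simp
  | succ k ih => simp [Function.iterate_succ_apply, f_mul, ih]

lemma iter_one (k : ℕ) : (f φ)^[k] (1 : N) = 1 := by
  induction k with
  | zero => simp
  | succ k ih => simp [Function.iterate_succ_apply, f, ih]

lemma iter_inv (k : ℕ) (x : N) : (f φ)^[k] x⁻¹ = ((f φ)^[k] x)⁻¹ := by
  have := iter_mul φ k x x⁻¹
  rw [mul_inv_cancel, iter_one] at this
  exact (inv_eq_of_mul_eq_one_right this.symm).symm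

lemma iter_act (s : Multiplicative (ZMod p)) (k : ℕ) (x : N) :
    φ s ((f φ)^[k] x) = (f φ)^[k] (φ s x) := by
  induction k generalizing x with
  | zero => simp
  | succ k ih => simp [Function.iterate_succ_apply, f_act, ih]

/-- range of `(g-1)^k` as a subgroup -/
def R (k : ℕ) : Subgroup N where
  carrier := Set.range ((f φ)^[k])
  one_mem' := ⟨1, iter_one φ k⟩
  mul_mem' := by rintro _ _ ⟨a, rfl⟩ ⟨b, rfl⟩; exact ⟨a * b, iter_mul φ k a b⟩
  inv_mem' := by rintro _ ⟨a, rfl⟩; exact ⟨a⁻¹, iter_inv φ k a⟩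

lemma pow_mem (m : ℕ) (x : N) :
    φ ((Multiplicative.ofAdd (1 : ZMod p)) ^ m) x * x⁻¹ ∈ R φ 1 := by
  induction m with
  | zero => simp [one_mem]
  | succ m ih =>
      have h1 : f φ (φ ((Multiplicative.ofAdd (1 : ZMod p)) ^ m) x) ∈ R φ 1 :=
        ⟨φ ((Multiplicative.ofAdd (1 : ZMod p)) ^ m) x, by simp⟩
      have key : φ ((Multiplicative.ofAdd (1 : ZMod p)) ^ (m + 1)) x * x⁻¹ =
          f φ (φ ((Multiplicative.ofAdd (1 : ZMod p)) ^ m) x) *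
            (φ ((Multiplicative.ofAdd (1 : ZMod p)) ^ m) x * x⁻¹) := by
        simp only [f]
        rw [pow_succ', map_mul, MulAut.mul_apply]
        group
      rw [key]
      exact mul_mem h1 ih

lemma act_mem [NeZero p] (s : Multiplicative (ZMod p)) (x : N) : φ s x * x⁻¹ ∈ R φ 1 := by
  have hs : (Multiplicative.ofAdd (1 : ZMod p)) ^ (Multiplicative.toAdd s).val = s := by
    rw [← ofAdd_nsmul, nsmul_eq_mul, mul_one, ZMod.natCast_val, ZMod.cast_id, ofAdd_toAdd]
  rw [← hs]
  exact pow_mem φ _ x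

lemma act_mem' [NeZero p] (k : ℕ) (s : Multiplicative (ZMod p)) (x : N) (h : x ∈ R φ k) :
    φ s x * x⁻¹ ∈ R φ (k + 1) := by
  obtain ⟨c, rfl⟩ := h
  obtain ⟨b, hb⟩ := act_mem φ s c
  refine ⟨b, ?_⟩
  rw [Function.iterate_succ_apply, show f φ b = φ s c * c⁻¹ by simpa using hb,
    iter_mul, iter_inv, ← iter_act]

lemma comm_formula (u v : N ⋊[φ] Multiplicative (ZMod p)) :
    ⁅u, v⁆ = SemidirectProduct.inl
      ((φ v.right u.left * u.left⁻¹)⁻¹ * (φ u.right v.left * v.left⁻¹)) := by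
  ext
  · simp only [commutatorElement_def, SemidirectProduct.mul_left, SemidirectProduct.inv_left,
      SemidirectProduct.mul_right, SemidirectProduct.inv_right, SemidirectProduct.left_inl,
      map_mul, map_inv, ← MulAut.mul_apply, ← map_mul]
    have h1 : φ (u.right * v.right) * (φ u.right)⁻¹ = φ v.right := by
      rw [mul_comm u.right, map_mul]; group
    have h2 : φ (u.right * v.right * u.right⁻¹) * (φ v.right)⁻¹ = 1 := by
      rw [mul_assoc, mul_comm v.right, ← mul_assoc]; group
    rw [h1, h2]
    simp only [MulAut.one_apply, mul_inv, inv_inv]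
    simp [mul_comm, mul_left_comm, mul_assoc]
  · simp only [commutatorElement_def, SemidirectProduct.mul_right, SemidirectProduct.inv_right,
      SemidirectProduct.right_inl]
    rw [mul_assoc u.right v.right, mul_comm v.right, ← mul_assoc]
    group

lemma main [NeZero p] (k : ℕ) :
    Subgroup.lowerCentralSeries (⊤ : Subgroup (N ⋊[φ] Multiplicative (ZMod p))) (k + 1)
      = (R φ (k + 1)).map (SemidirectProduct.inl) := by
  induction k with
  | zero =>
      show ⁅(⊤ : Subgroup (N ⋊[φ] Multiplicative (ZMod p))), ⊤⁆ = _
      apply le_antisymm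
      · rw [Subgroup.commutator_le]
        intro u _ v _
        rw [comm_formula]
        exact Subgroup.mem_map_of_mem _
          (mul_mem (inv_mem (act_mem φ v.right u.left)) (act_mem φ u.right v.left))
      · rintro _ ⟨_, ⟨a, rfl⟩, rfl⟩
        have h : (SemidirectProduct.inl ((f φ)^[1] a) : N ⋊[φ] Multiplicative (ZMod p))
            = ⁅(SemidirectProduct.inr (Multiplicative.ofAdd (1 : ZMod p)) :
                  N ⋊[φ] Multiplicative (ZMod p)), SemidirectProduct.inl a⁆ := by
          rw [comm_formula]
          simp [f]
        rw [h]
        exact Subgroup.commutator_mem_commutator (Subgroup.mem_top _) (Subgroup.mem_top _)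
  | succ k ih =>
      show ⁅Subgroup.lowerCentralSeries (⊤ : Subgroup (N ⋊[φ] Multiplicative (ZMod p))) (k + 1), ⊤⁆ = _
      rw [ih]
      apply le_antisymm
      · rw [Subgroup.commutator_le]
        rintro _ ⟨x, hx, rfl⟩ v _
        rw [comm_formula]
        have hmem : (φ v.right x * x⁻¹)⁻¹ ∈ R φ (k + 2) :=
          inv_mem (act_mem' φ (k + 1) v.right x hx)
        refine Subgroup.mem_map_of_mem _ ?_
        simpa using mul_mem hmem (one_mem _)
      · rintro _ ⟨_, ⟨a, rfl⟩, rfl⟩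
        have h : (SemidirectProduct.inl ((f φ)^[k + 2] a) : N ⋊[φ] Multiplicative (ZMod p))
            = ⁅(SemidirectProduct.inl ((f φ)^[k + 1] a) : N ⋊[φ] Multiplicative (ZMod p)),
               SemidirectProduct.inr (Multiplicative.ofAdd (1 : ZMod p))⁆⁻¹ := by
          rw [comm_formula]
          simp [Function.iterate_succ_apply' (f φ) (k + 1) a, f]
        rw [h]
        exact inv_mem (Subgroup.commutator_mem_commutator
          (Subgroup.mem_map_of_mem _ ⟨a, rfl⟩) (Subgroup.mem_top _))

end Stmt4Aux

/-- Let `p` be a prime, `G = Z/p` a group of order `p` with generator `g`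
acting on an abelian group `N` of exponent `p` (an `F_p[G]`-module, written here
multiplicatively), and let `T = N ⋊ G`.  Then for every `n ≥ 2` the `n`-th term of the
lower central series `T_{(n)}` (which is `lowerCentralSeries T (n-1)` in Mathlib's
indexing) equals the image of `N` under `(g-1)^{n-1}`, where `g - 1` is the
endomorphism `x ↦ (g • x) * x⁻¹` of `N`. -/
theorem stmt4 (p : ℕ) (hp : p.Prime) (N : Type*) [CommGroup N]
    (hexp : ∀ x : N, x ^ p = 1)
    (φ : Multiplicative (ZMod p) →* MulAut N) (n : ℕ) (hn : 2 ≤ n) :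
    ((Subgroup.lowerCentralSeries (⊤ : Subgroup (N ⋊[φ] Multiplicative (ZMod p))) (n - 1) : Subgroup _) :
        Set (N ⋊[φ] Multiplicative (ZMod p)))
      = SemidirectProduct.inl ''
          Set.range ((fun x : N => φ (Multiplicative.ofAdd (1 : ZMod p)) x * x⁻¹)^[n - 1]) := by
  haveI : NeZero p := ⟨hp.ne_zero⟩
  obtain ⟨m, rfl⟩ : ∃ m, n = m + 2 := ⟨n - 2, by omega⟩
  show (↑(Subgroup.lowerCentralSeries (⊤ : Subgroup (N ⋊[φ] Multiplicative (ZMod p))) (m + 1))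
        : Set (N ⋊[φ] Multiplicative (ZMod p)))
      = SemidirectProduct.inl ''
          Set.range ((fun x : N => φ (Multiplicative.ofAdd (1 : ZMod p)) x * x⁻¹)^[m + 1])
  rw [Stmt4Aux.main φ m, Subgroup.coe_map]
  rfl
end

section
/- Let p be a prime and T a group with a normal abelian subgroup N of index p of exponent dividing p, with σ ∈ T \ N. If σ^p ∈ N^{(σ-1)^{p-1}} (that is, σ^p = ν^{(σ-1)^{p-1}} for some ν ∈ N, where ν^{(σ-1)} := σνσ^{-1}ν^{-1}), then there exists τ ∈ T \ N with τ^p = 1; consequently T ≅ N ⋊ Z/p (the extension splits). -/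
/-!
Put `τ = ν⁻¹ σ`. Expanding the power gives `τ ^ p = (∏_{i<p} σ^i ν σ^{-i})⁻¹ σ ^ p`. On the
`𝔽_p`-vector space `N`, the norm `1 + σ + ⋯ + σ^{p-1}` of conjugation by `σ` equals `(σ - 1)^{p-1}`,
because `Φ_p = Φ_1 ^ (p - 1)` in characteristic `p`; so the product is `ν^{(σ-1)^{p-1}} = σ ^ p`
and `τ ^ p = 1`. Since `τ ∉ N`, the subgroup `⟨τ⟩` has order `p`, hence meets `N` trivially, and
it generates `T` together with `N`, which is maximal because its index is prime.
-/

open Finset Function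
open scoped IsMulCommutative

theorem sub_one_pow_pred_eq_sum_range_pow {p : ℕ} [hp : Fact p.Prime] {A : Type*} [Ring A]
    [Algebra (ZMod p) A] (a : A) : (a - 1) ^ (p - 1) = ∑ i ∈ range p, a ^ i := by
  have h := Polynomial.cyclotomic_mul_prime_eq_pow_of_not_dvd (ZMod p) (n := 1)
    (Nat.Prime.not_dvd_one hp.out)
  rw [one_mul, Polynomial.cyclotomic_prime, Polynomial.cyclotomic_one] at h
  simpa using congr(Polynomial.aeval a $h.symm)

theorem prod_range_iterate_eq_iterate_div {p : ℕ} [Fact p.Prime] {G : Type*} [CommGroup G]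
    (hG : ∀ x : G, x ^ p = 1) (f : G →* G) (x : G) :
    ∏ i ∈ range p, f^[i] x = (fun y => f y / y)^[p - 1] x := by
  -- `have`, not `let`: unfolding `zmodModule`, a match on `p`, gets instance search stuck
  have : Module (ZMod p) (Additive G) := AddCommGroup.zmodModule fun x => hG x.toMul
  let s : Module.End (ZMod p) (Additive G) := f.toAdditive.toZModLinearMap p
  have hf : Semiconj Additive.ofMul f s := fun _ => rfl
  have hs : Semiconj Additive.ofMul (fun y => f y / y) ⇑(s - 1) := fun _ => rfl
  have hiter (i : ℕ) (y : G) : (s ^ i) (Additive.ofMul y) = Additive.ofMul (f^[i] y) := by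
    rw [Module.End.pow_apply, hf.iterate_right]
  have h := congr($(sub_one_pow_pred_eq_sum_range_pow (p := p) s) (Additive.ofMul x))
  rw [Module.End.pow_apply, ← hs.iterate_right (p - 1) x, LinearMap.sum_apply] at h
  apply Additive.ofMul.injective
  rw [h, ofMul_prod]
  simp only [hiter]

section

variable {T : Type*} [Group T] {N : Subgroup T} [N.Normal]

theorem coe_conjNormal_iterate (σ : T) (a : N) (n : ℕ) :
    ((MulAut.conjNormal σ)^[n] a : T) = σ ^ n * a * (σ ^ n)⁻¹ := by
  induction n with
  | zero => simp
  | succ n ih => rw [iterate_succ_apply', MulAut.conjNormal_apply, ih]; group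

theorem mul_pow_eq_prod_conjNormal_iterate_mul_pow [IsMulCommutative N] (a : N) (σ : T) (n : ℕ) :
    (a * σ) ^ n = ↑(∏ i ∈ range n, (MulAut.conjNormal σ)^[i] a) * σ ^ n := by
  induction n with
  | zero => simp
  | succ n ih =>
    rw [pow_succ, ih, prod_range_succ, Subgroup.coe_mul, coe_conjNormal_iterate]
    group

theorem coe_iterate_conjNormal_div (σ : T) (a : N) (n : ℕ) :
    ((fun y : N => MulAut.conjNormal σ y / y)^[n] a : T) =
      (fun x : T => σ * x * σ⁻¹ * x⁻¹)^[n] a :=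
  Semiconj.iterate_right (f := Subtype.val)
    (fun y => by simp [MulAut.conjNormal_apply, div_eq_mul_inv]) n a

theorem inv_mul_pow_eq_one_of_pow_eq_iterate {p : ℕ} [Fact p.Prime] [IsMulCommutative N]
    (hN : ∀ x : N, x ^ p = 1) {σ : T} {ν : N}
    (h : σ ^ p = (fun x : T => σ * x * σ⁻¹ * x⁻¹)^[p - 1] ν) : (↑ν⁻¹ * σ) ^ p = 1 := by
  have hnorm := prod_range_iterate_eq_iterate_div hN (MulAut.conjNormal σ).toMonoidHom ν
  simp only [MulEquiv.coe_toMonoidHom] at hnorm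
  rw [mul_pow_eq_prod_conjNormal_iterate_mul_pow]
  simp only [iterate_map_inv, prod_inv_distrib, Subgroup.coe_inv]
  rw [hnorm, coe_iterate_conjNormal_div, ← h, inv_mul_cancel]

end

namespace Subgroup

variable {G : Type*} [Group G] {H K : Subgroup G}

theorem disjoint_of_card_prime_of_not_le (hK : (Nat.card K).Prime) (hKH : ¬K ≤ H) :
    Disjoint H K := by
  have : Finite K := Nat.finite_of_card_ne_zero hK.ne_zero
  rw [disjoint_iff, ← card_eq_one]
  refine (hK.eq_one_or_self_of_dvd _ (card_dvd_of_le inf_le_right)).resolve_right fun hcard => ?_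
  exact hKH (eq_of_le_of_card_ge inf_le_right hcard.ge ▸ inf_le_left)

theorem sup_eq_top_of_index_prime_of_not_le (hH : H.index.Prime) (hKH : ¬K ≤ H) :
    H ⊔ K = ⊤ := by
  rw [← index_eq_one]
  refine (hH.eq_one_or_self_of_dvd _ (index_dvd_of_le le_sup_left)).resolve_right fun hidx => ?_
  have hrel := relIndex_mul_index (le_sup_left : H ≤ H ⊔ K)
  rw [hidx, Nat.mul_eq_right hH.ne_zero, relIndex_eq_one] at hrel
  exact hKH (le_sup_right.trans hrel)

theorem isComplement'_zpowers_of_index_eq_prime {p : ℕ} [hp : Fact p.Prime] [H.Normal]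
    (hH : H.index = p) {τ : G} (hτH : τ ∉ H) (hτp : τ ^ p = 1) :
    H.IsComplement' (zpowers τ) := by
  have hτK : ¬zpowers τ ≤ H := fun hle => hτH (hle (mem_zpowers τ))
  have hτ1 : τ ≠ 1 := fun h1 => hτH (h1 ▸ H.one_mem)
  have hcard : Nat.card (zpowers τ) = p := by
    rw [Nat.card_zpowers, orderOf_eq_prime hτp hτ1]
  refine isComplement'_of_disjoint_and_mul_eq_univ
    (disjoint_of_card_prime_of_not_le (hcard ▸ hp.out) hτK) ?_
  rw [← normal_mul, sup_eq_top_of_index_prime_of_not_le (hH ▸ hp.out) hτK, coe_top]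

end Subgroup

/-- Let `p` be a prime and `T` a group with a normal abelian subgroup `N`
of index `p` of exponent dividing `p`, with `σ ∈ T \ N`.  If
`σ^p ∈ N^{(σ-1)^{p-1}}`, i.e. `σ^p = ν^{(σ-1)^{p-1}}` for some `ν ∈ N`, where
`ν^{(σ-1)} := σνσ⁻¹ν⁻¹`, then there exists `τ ∈ T \ N` with `τ^p = 1`; consequently
the extension splits: `⟨τ⟩` is a complement of `N` in `T`, so `T ≅ N ⋊ Z/p`. -/
theorem stmt10 (p : ℕ) (hp : p.Prime) {T : Type*} [Group T]
    (N : Subgroup T) [N.Normal] (hidx : N.index = p)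
    (hab : ∀ x ∈ N, ∀ y ∈ N, Commute x y)
    (hexp : ∀ x ∈ N, x ^ p = 1)
    (σ : T) (hσ : σ ∉ N)
    (hyp : ∃ ν ∈ N, σ ^ p = (fun x : T => σ * x * σ⁻¹ * x⁻¹)^[p - 1] ν) :
    ∃ τ : T, τ ∉ N ∧ τ ^ p = 1 ∧ Subgroup.IsComplement' N (Subgroup.zpowers τ) := by
  have : Fact p.Prime := ⟨hp⟩
  have : IsMulCommutative N := ⟨⟨fun a b => Subtype.ext (hab a a.2 b b.2)⟩⟩
  obtain ⟨ν, hν, hσp⟩ := hyp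
  have hτp : (ν⁻¹ * σ) ^ p = 1 :=
    inv_mul_pow_eq_one_of_pow_eq_iterate (fun x : N => Subtype.ext (hexp x x.2)) (ν := ⟨ν, hν⟩) hσp
  have hτN : ν⁻¹ * σ ∉ N := fun h => hσ ((N.mul_mem_cancel_left (N.inv_mem hν)).mp h)
  exact ⟨_, hτN, hτp, Subgroup.isComplement'_zpowers_of_index_eq_prime hidx hτN hτp⟩
end

section
/- Let p be an odd prime and T a finite group with two distinct maximal subgroups M, N of index p that are abelian of exponent p, with N not contained in the center of T. Then T is isomorphic to the direct product H × E of the Heisenberg group H of order p^3 and an elementary abelian p-group E. -/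
open Subgroup
open scoped commutatorElement

private lemma aux_eq_of_le_of_index_eq {T : Type*} [Group T] [Finite T] {A B : Subgroup T}
    (h : A ≤ B) (hidx : A.index = B.index) : A = B := by
  have h1 := Subgroup.relIndex_mul_index h
  have hB : B.index ≠ 0 := Subgroup.index_ne_zero_of_finite
  rw [hidx] at h1
  have h2 : A.relIndex B = 1 :=
    mul_right_cancel₀ hB (h1.trans (one_mul B.index).symm)
  exact le_antisymm h (Subgroup.relIndex_eq_one.mp h2)

private lemma aux_top {p : ℕ} (hp : p.Prime) {T : Type*} [Group T] [Finite T] {A B : Subgroup T}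
    (h : A ≤ B) (hA : A.index = p) (hne : A ≠ B) : B = ⊤ := by
  have h1 := Subgroup.relIndex_mul_index h
  rw [hA] at h1
  rcases (Nat.dvd_prime hp).mp (Dvd.intro_left _ h1) with h2 | h2
  · exact Subgroup.index_eq_one.mp h2
  · exact absurd (aux_eq_of_le_of_index_eq h (hA.trans h2.symm)) hne

private lemma aux_iso {T : Type*} [Group T] {A B : Subgroup T}
    (hcomm : ∀ x ∈ A, ∀ y ∈ B, Commute x y) (hinf : A ⊓ B = ⊥) :
    ∃ φ : (↥A × ↥B) →* T, Function.Injective φ ∧ φ.range = A ⊔ B := by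
  refine ⟨(A.subtype.noncommCoprod B.subtype (fun x y => hcomm x x.2 y y.2)), ?_, ?_⟩
  · rw [injective_iff_map_eq_one]
    rintro ⟨x, y⟩ hxy
    change (x : T) * (y : T) = 1 at hxy
    have hxB : (x : T) ∈ B := by
      have : (x : T) = (y : T)⁻¹ := by
        rw [eq_inv_iff_mul_eq_one]; exact hxy
      rw [this]; exact inv_mem y.2
    have hx : (x : T) ∈ A ⊓ B := ⟨x.2, hxB⟩
    rw [hinf, Subgroup.mem_bot] at hx
    have hy : (y : T) = 1 := by
      rw [hx, one_mul] at hxy; exact hxy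
    exact Prod.ext (Subtype.ext hx) (Subtype.ext hy)
  · apply le_antisymm
    · rintro t ⟨⟨x, y⟩, rfl⟩
      exact mul_mem ((le_sup_left : A ≤ A ⊔ B) x.2) ((le_sup_right : B ≤ A ⊔ B) y.2)
    · refine sup_le ?_ ?_
      · intro x hx
        exact ⟨(⟨x, hx⟩, 1), by exact mul_one x⟩
      · intro y hy
        exact ⟨(1, ⟨y, hy⟩), by exact one_mul y⟩

private def auxMod (p : ℕ) (hp : 0 < p) (G : Type*) [CommGroup G]
    (hsm : ∀ (x : Additive G), p • x = 0) : Module (ZMod p) (Additive G) :=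
  haveI : NeZero p := ⟨hp.ne'⟩
  AddCommMonoid.zmodModule hsm



open scoped commutatorElement in
/-- A group is "the Heisenberg group of order `p^3`" if it has order `p^3` and is
generated by two elements `a, b` satisfying the defining relations
`a^p = b^p = ⁅a,b⁆^p = 1` with `⁅a,b⁆` central. -/
def IsHeisenberg (p : ℕ) (H : Type*) [Group H] : Prop :=
  Nat.card H = p ^ 3 ∧
  ∃ a b : H, Subgroup.closure {a, b} = ⊤ ∧
    a ^ p = 1 ∧ b ^ p = 1 ∧ ⁅a, b⁆ ^ p = 1 ∧ ⁅a, b⁆ ∈ Subgroup.center H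

/-- Let `p` be an odd prime and `T` a finite `p`-group with two distinct
maximal subgroups `M, N` of index `p` that are abelian of exponent `p`, with `N` not
contained in the center of `T`.  Then `T` is isomorphic to the direct product `H × E`
of the Heisenberg group `H` of order `p^3` and an elementary abelian `p`-group `E`. -/
theorem stmt14 (p : ℕ) (hp : p.Prime) (hodd : Odd p) {T : Type*} [Group T] [Finite T]
    (hpgroup : IsPGroup p T)
    (M N : Subgroup T) (hMN : M ≠ N)
    (hMidx : M.index = p) (hNidx : N.index = p)
    (hMab : ∀ x ∈ M, ∀ y ∈ M, Commute x y) (hMexp : ∀ x ∈ M, x ^ p = 1)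
    (hNab : ∀ x ∈ N, ∀ y ∈ N, Commute x y) (hNexp : ∀ x ∈ N, x ^ p = 1)
    (hnc : ¬ N ≤ Subgroup.center T) :
    ∃ (H E : Subgroup T), IsHeisenberg p H ∧
      (∀ x ∈ E, ∀ y ∈ E, Commute x y) ∧ (∀ x ∈ E, x ^ p = 1) ∧
      Nonempty (T ≃* H × E) := by
  haveI : Fact p.Prime := ⟨hp⟩
  have hppos : 0 < p := hp.pos
  -- neither contained in the other
  have hMleN : ¬ M ≤ N := fun h => hMN (aux_eq_of_le_of_index_eq h (hMidx.trans hNidx.symm))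
  have hNleM : ¬ N ≤ M := fun h => hMN (aux_eq_of_le_of_index_eq h (hNidx.trans hMidx.symm)).symm
  -- M ⊔ N = ⊤
  have hsupMN : M ⊔ N = ⊤ := by
    refine aux_top hp le_sup_left hMidx (fun h => hNleM ?_)
    rw [h]
    exact le_sup_right
  set Z : Subgroup T := M ⊓ N with hZdef
  -- Z is central
  have hZc : Z ≤ Subgroup.center T := by
    intro z hz
    rw [Subgroup.mem_center_iff]
    intro g
    have hcen : M ⊔ N ≤ Subgroup.centralizer {z} := by
      refine sup_le ?_ ?_
      · intro m hm
        rw [Subgroup.mem_centralizer_iff]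
        intro s hs
        rw [Set.mem_singleton_iff] at hs; subst hs
        exact (hMab s hz.1 m hm).eq
      · intro n hn
        rw [Subgroup.mem_centralizer_iff]
        intro s hs
        rw [Set.mem_singleton_iff] at hs; subst hs
        exact (hNab s hz.2 n hn).eq
    have : g ∈ Subgroup.centralizer {z} := hcen (hsupMN ▸ Subgroup.mem_top g)
    exact (Subgroup.mem_centralizer_iff.mp this z rfl).symm
  -- index of Z is p^2
  have hZindne : Z.index ≠ 0 := Subgroup.index_ne_zero_of_finite
  have h1 : Z.relIndex M = N.relIndex M := by
    rw [hZdef, inf_comm]; exact Subgroup.inf_relIndex_right N M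
  have h2 : N.relIndex M * p = Z.index := by
    have := Subgroup.relIndex_mul_index (inf_le_left : Z ≤ M)
    rw [h1, hMidx] at this; exact this
  have hrel : N.relIndex M = p := by
    have h3 : Z.index ≤ p * p := by
      have := Subgroup.index_inf_le (H := M) (K := N)
      rw [hMidx, hNidx] at this; exact this
    have hne1 : N.relIndex M ≠ 1 := fun h => hMleN (Subgroup.relIndex_eq_one.mp h)
    have hne0 : N.relIndex M ≠ 0 := by
      intro h; rw [h, zero_mul] at h2; exact hZindne h2.symm
    have hdvd : N.relIndex M ∣ Nat.card T := by
      refine dvd_trans ?_ (Subgroup.card_subgroup_dvd_card M)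
      exact Subgroup.index_dvd_card _
    obtain ⟨n, hcard⟩ := hpgroup.exists_card_eq
    rw [hcard] at hdvd
    obtain ⟨k, hk, hkeq⟩ := (Nat.dvd_prime_pow hp).mp hdvd
    have hk0 : k ≠ 0 := by rintro rfl; rw [pow_zero] at hkeq; exact hne1 hkeq
    have hple : p ∣ N.relIndex M := hkeq ▸ dvd_pow_self p hk0
    have hlep : N.relIndex M ≤ p := by
      have : N.relIndex M * p ≤ p * p := h2 ▸ h3
      exact Nat.le_of_mul_le_mul_right this hppos
    exact Nat.le_antisymm hlep (Nat.le_of_dvd (Nat.pos_of_ne_zero hne0) hple)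
  have hZidx : Z.index = p * p := by rw [← h2, hrel]
  -- Z is normal
  have hZnormal : Z.Normal := by
    constructor
    intro z hz g
    have hcz := Subgroup.mem_center_iff.mp (hZc hz) g
    have : g * z * g⁻¹ = z := by rw [hcz, mul_assoc, mul_inv_cancel, mul_one]
    rw [this]; exact hz
  -- the quotient T / Z is commutative, so all commutators lie in Z
  have hcommZ : ∀ x y : T, ⁅x, y⁆ ∈ Z := by
    have hqcard : Nat.card (T ⧸ Z) = p ^ 2 := by
      rw [← Subgroup.index_eq_card, hZidx, sq]
    have hqcomm := IsPGroup.commutative_of_card_eq_prime_sq (p := p) hqcard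
    intro x y
    have : (QuotientGroup.mk' Z) ⁅x, y⁆ = 1 := by
      rw [map_commutatorElement]
      exact commutatorElement_eq_one_iff_commute.mpr (hqcomm _ _)
    rwa [← MonoidHom.mem_ker, QuotientGroup.ker_mk'] at this
  -- choose generators a and b
  obtain ⟨b, hbN, hbnc⟩ := SetLike.not_le_iff_exists.mp hnc
  obtain ⟨a, haM, haN⟩ := SetLike.not_le_iff_exists.mp hMleN
  have hbZ : b ∉ Z := fun h => hbnc (hZc h)
  set c : T := ⁅a, b⁆ with hcdef
  have hcZ : c ∈ Z := hcommZ a b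
  have hccen : c ∈ Subgroup.center T := hZc hcZ
  have hc_comm : ∀ t : T, Commute c t := fun t =>
    ((Subgroup.mem_center_iff.mp hccen t).symm : Commute c t)
  have hap : a ^ p = 1 := hMexp a haM
  have hbp : b ^ p = 1 := hNexp b hbN
  have hcp : c ^ p = 1 := hMexp c hcZ.1
  -- c is nontrivial
  have hcne : c ≠ 1 := by
    intro hc1
    have hab : Commute a b := commutatorElement_eq_one_iff_commute.mp hc1
    have htop : Subgroup.zpowers a ⊔ N = ⊤ := by
      refine aux_top hp le_sup_right hNidx (fun h => haN ?_)
      rw [h]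
      exact (le_sup_left : Subgroup.zpowers a ≤ _) (Subgroup.mem_zpowers a)
    refine hbnc ?_
    rw [Subgroup.mem_center_iff]
    intro g
    have hcen : Subgroup.zpowers a ⊔ N ≤ Subgroup.centralizer {b} := by
      refine sup_le ?_ ?_
      · rw [Subgroup.zpowers_le, Subgroup.mem_centralizer_iff]
        intro s hs
        rw [Set.mem_singleton_iff] at hs; subst hs
        exact hab.symm.eq
      · intro n hn
        rw [Subgroup.mem_centralizer_iff]
        intro s hs
        rw [Set.mem_singleton_iff] at hs; subst hs
        exact (hNab s hbN n hn).eq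
    have : g ∈ Subgroup.centralizer {b} := hcen (htop ▸ Subgroup.mem_top g)
    exact (Subgroup.mem_centralizer_iff.mp this b rfl).symm
  have horderc : orderOf c = p := orderOf_eq_prime hcp hcne
  -- basic commutation identities
  have hba : b * a = a * b * c⁻¹ := by
    have h0 : c * (b * a) = a * b := by rw [hcdef, commutatorElement_def]; group
    calc b * a = c⁻¹ * (c * (b * a)) := by group
    _ = c⁻¹ * (a * b) := by rw [h0]
    _ = a * b * c⁻¹ := by rw [((hc_comm (a * b)).inv_left).eq]
  have hconj1 : a * b * a⁻¹ = c * b := by rw [hcdef, commutatorElement_def]; group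
  have hconj2 : b * a * b⁻¹ = c⁻¹ * a := by
    calc b * a * b⁻¹ = (a * b * c⁻¹) * b⁻¹ := by rw [hba]
    _ = a * (b * c⁻¹) * b⁻¹ := by group
    _ = a * (c⁻¹ * b) * b⁻¹ := by rw [← ((hc_comm b).inv_left).eq]
    _ = a * c⁻¹ := by group
    _ = c⁻¹ * a := (((hc_comm a).inv_left).eq).symm
  have P1 : ∀ j : ℕ, b ^ j * a = a * b ^ j * c⁻¹ ^ j := by
    intro j; induction j with
    | zero => simp
    | succ n ih =>
      have hcb : Commute c⁻¹ (b ^ n) := ((hc_comm (b ^ n)).inv_left)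
      calc b ^ (n+1) * a = b * (b ^ n * a) := by rw [pow_succ']; group
      _ = b * (a * b ^ n * c⁻¹ ^ n) := by rw [ih]
      _ = (b * a) * b ^ n * c⁻¹ ^ n := by group
      _ = (a * b * c⁻¹) * b ^ n * c⁻¹ ^ n := by rw [hba]
      _ = a * b * (c⁻¹ * b ^ n) * c⁻¹ ^ n := by group
      _ = a * b * (b ^ n * c⁻¹) * c⁻¹ ^ n := by rw [hcb.eq]
      _ = a * (b * b ^ n) * (c⁻¹ * c⁻¹ ^ n) := by group
      _ = a * b ^ (n+1) * c⁻¹ ^ (n+1) := by rw [← pow_succ', ← pow_succ']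
  have P2 : ∀ j i : ℕ, b ^ j * a ^ i = a ^ i * b ^ j * c⁻¹ ^ (j * i) := by
    intro j i; induction i with
    | zero => simp
    | succ n ih =>
      have hca : Commute (c⁻¹ ^ (j * n)) a := ((hc_comm a).inv_left).pow_left _
      calc b ^ j * a ^ (n+1) = (b ^ j * a ^ n) * a := by rw [pow_succ]; group
      _ = (a ^ n * b ^ j * c⁻¹ ^ (j * n)) * a := by rw [ih]
      _ = a ^ n * b ^ j * (c⁻¹ ^ (j * n) * a) := by group
      _ = a ^ n * b ^ j * (a * c⁻¹ ^ (j * n)) := by rw [hca.eq]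
      _ = a ^ n * (b ^ j * a) * c⁻¹ ^ (j * n) := by group
      _ = a ^ n * (a * b ^ j * c⁻¹ ^ j) * c⁻¹ ^ (j * n) := by rw [P1]
      _ = (a ^ n * a) * b ^ j * (c⁻¹ ^ j * c⁻¹ ^ (j * n)) := by group
      _ = a ^ (n+1) * b ^ j * c⁻¹ ^ (j * (n+1)) := by
          rw [← pow_succ, ← pow_add, Nat.mul_succ]
          ring_nf
  have Q1 : ∀ j : ℕ, a * b ^ j * a⁻¹ = c ^ j * b ^ j := by
    intro j; induction j with
    | zero => simp
    | succ n ih =>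
      have hcb : Commute (c ^ n) (c * b) := (hc_comm _).pow_left _
      calc a * b ^ (n+1) * a⁻¹ = (a * b ^ n * a⁻¹) * (a * b * a⁻¹) := by rw [pow_succ]; group
      _ = (c ^ n * b ^ n) * (c * b) := by rw [ih, hconj1]
      _ = c ^ n * (b ^ n * c) * b := by group
      _ = c ^ n * (c * b ^ n) * b := by rw [((hc_comm (b ^ n)).symm).eq]
      _ = (c ^ n * c) * (b ^ n * b) := by group
      _ = c ^ (n+1) * b ^ (n+1) := by rw [pow_succ, pow_succ]
  have Q2 : ∀ i : ℕ, b * a ^ i * b⁻¹ = c⁻¹ ^ i * a ^ i := by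
    intro i; induction i with
    | zero => simp
    | succ n ih =>
      calc b * a ^ (n+1) * b⁻¹ = (b * a ^ n * b⁻¹) * (b * a * b⁻¹) := by rw [pow_succ]; group
      _ = (c⁻¹ ^ n * a ^ n) * (c⁻¹ * a) := by rw [ih, hconj2]
      _ = c⁻¹ ^ n * (a ^ n * c⁻¹) * a := by group
      _ = c⁻¹ ^ n * (c⁻¹ * a ^ n) * a := by rw [(((hc_comm (a ^ n)).inv_left).symm).eq]
      _ = (c⁻¹ ^ n * c⁻¹) * (a ^ n * a) := by group
      _ = c⁻¹ ^ (n+1) * a ^ (n+1) := by rw [pow_succ, pow_succ]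
  -- inverses of the generators as positive powers
  have hp1 : 1 + (p - 1) = p := by omega
  have INV : ∀ x : T, x ^ p = 1 → ∀ i : ℕ, (x ^ i)⁻¹ = x ^ ((p - 1) * i) := by
    intro x hx i
    refine inv_eq_of_mul_eq_one_right ?_
    rw [← pow_add]
    have hsp : (p - 1) + 1 = p := Nat.succ_pred_eq_of_pos hppos
    have : i + (p - 1) * i = p * i := by
      conv_rhs => rw [← hsp]
      rw [Nat.add_mul, one_mul, Nat.add_comm]
    rw [this, pow_mul, hx, one_pow]
  have hcinv : ∀ m : ℕ, c⁻¹ ^ m = c ^ ((p - 1) * m) := by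
    intro m
    rw [← INV c hcp m, inv_pow]
  -- the subgroup generated by a and b
  set Hgrp : Subgroup T := Subgroup.closure {a, b} with hHdef
  have haH : a ∈ Hgrp := Subgroup.subset_closure (Set.mem_insert a {b})
  have hbH : b ∈ Hgrp := Subgroup.subset_closure (Set.mem_insert_of_mem a rfl)
  have hcH : c ∈ Hgrp := by
    rw [hcdef, commutatorElement_def]
    exact mul_mem (mul_mem (mul_mem haH hbH) (inv_mem haH)) (inv_mem hbH)
  -- every element of Hgrp has the normal form a^i * b^j * c^k
  have Hstruct : ∀ x ∈ Hgrp, ∃ i j k : ℕ, x = a ^ i * b ^ j * c ^ k := by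
    intro x hx
    induction hx using Subgroup.closure_induction with
    | mem g hg =>
      rcases hg with hg | hg
      · exact ⟨1, 0, 0, by subst hg; simp⟩
      · exact ⟨0, 1, 0, by rw [Set.mem_singleton_iff] at hg; subst hg; simp⟩
    | one => exact ⟨0, 0, 0, by simp⟩
    | mul x y hxm hym ihx ihy =>
      obtain ⟨i, j, k, rfl⟩ := ihx
      obtain ⟨i', j', k', rfl⟩ := ihy
      refine ⟨i + i', j + j', (p - 1) * (j * i') + (k + k'), ?_⟩
      have hck_a : Commute (c ^ k) (a ^ i') := (hc_comm _).pow_left _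
      have hck_b : Commute (c ^ k) (b ^ j') := (hc_comm _).pow_left _
      have hci_b : Commute (c⁻¹ ^ (j * i')) (b ^ j') := ((hc_comm _).inv_left).pow_left _
      calc a ^ i * b ^ j * c ^ k * (a ^ i' * b ^ j' * c ^ k')
          = a ^ i * b ^ j * (c ^ k * a ^ i') * b ^ j' * c ^ k' := by group
        _ = a ^ i * b ^ j * (a ^ i' * c ^ k) * b ^ j' * c ^ k' := by rw [hck_a.eq]
        _ = a ^ i * (b ^ j * a ^ i') * (c ^ k * b ^ j') * c ^ k' := by group
        _ = a ^ i * (b ^ j * a ^ i') * (b ^ j' * c ^ k) * c ^ k' := by rw [hck_b.eq]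
        _ = a ^ i * (a ^ i' * b ^ j * c⁻¹ ^ (j * i')) * (b ^ j' * c ^ k) * c ^ k' := by rw [P2]
        _ = (a ^ i * a ^ i') * b ^ j * (c⁻¹ ^ (j * i') * b ^ j') * (c ^ k * c ^ k') := by group
        _ = (a ^ i * a ^ i') * b ^ j * (b ^ j' * c⁻¹ ^ (j * i')) * (c ^ k * c ^ k') := by
            rw [hci_b.eq]
        _ = (a ^ i * a ^ i') * (b ^ j * b ^ j') * (c⁻¹ ^ (j * i') * (c ^ k * c ^ k')) := by group
        _ = a ^ (i + i') * b ^ (j + j') * c ^ ((p - 1) * (j * i') + (k + k')) := by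
            rw [hcinv, ← pow_add, ← pow_add, ← pow_add, ← pow_add]
    | inv x hxm ihx =>
      obtain ⟨i, j, k, rfl⟩ := ihx
      refine ⟨(p - 1) * i, (p - 1) * j, (p - 1) * k + (p - 1) * (((p - 1) * j) * ((p - 1) * i)), ?_⟩
      have hcK_a : Commute (c ^ ((p - 1) * k)) (a ^ ((p - 1) * i)) := (hc_comm _).pow_left _
      have hcK_b : Commute (c ^ ((p - 1) * k)) (b ^ ((p - 1) * j)) := (hc_comm _).pow_left _
      calc (a ^ i * b ^ j * c ^ k)⁻¹
          = (c ^ k)⁻¹ * ((b ^ j)⁻¹ * (a ^ i)⁻¹) := by group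
        _ = c ^ ((p - 1) * k) * (b ^ ((p - 1) * j) * a ^ ((p - 1) * i)) := by
            rw [INV a hap, INV b hbp, INV c hcp]
        _ = c ^ ((p - 1) * k) * (a ^ ((p - 1) * i) * b ^ ((p - 1) * j)
              * c⁻¹ ^ (((p - 1) * j) * ((p - 1) * i))) := by rw [P2]
        _ = (c ^ ((p - 1) * k) * a ^ ((p - 1) * i)) * b ^ ((p - 1) * j)
              * c⁻¹ ^ (((p - 1) * j) * ((p - 1) * i)) := by group
        _ = (a ^ ((p - 1) * i) * c ^ ((p - 1) * k)) * b ^ ((p - 1) * j)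
              * c⁻¹ ^ (((p - 1) * j) * ((p - 1) * i)) := by rw [hcK_a.eq]
        _ = a ^ ((p - 1) * i) * (c ^ ((p - 1) * k) * b ^ ((p - 1) * j))
              * c⁻¹ ^ (((p - 1) * j) * ((p - 1) * i)) := by group
        _ = a ^ ((p - 1) * i) * (b ^ ((p - 1) * j) * c ^ ((p - 1) * k))
              * c⁻¹ ^ (((p - 1) * j) * ((p - 1) * i)) := by rw [hcK_b.eq]
        _ = a ^ ((p - 1) * i) * b ^ ((p - 1) * j)
              * (c ^ ((p - 1) * k) * c⁻¹ ^ (((p - 1) * j) * ((p - 1) * i))) := by group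
        _ = a ^ ((p - 1) * i) * b ^ ((p - 1) * j)
              * c ^ ((p - 1) * k + (p - 1) * (((p - 1) * j) * ((p - 1) * i))) := by
            rw [hcinv, ← pow_add]
  set Cc : Subgroup T := Subgroup.zpowers c with hCcdef
  have hCcZ : Cc ≤ Z := Subgroup.zpowers_le.mpr hcZ
  have hCcH : Cc ≤ Hgrp := Subgroup.zpowers_le.mpr hcH
  -- H ∩ Z is contained in ⟨c⟩
  have hHZle : Hgrp ⊓ Z ≤ Cc := by
    rintro x ⟨hxH, hxZ⟩
    obtain ⟨i, j, k, rfl⟩ := Hstruct _ hxH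
    have hxc : ∀ g : T, g * (a ^ i * b ^ j * c ^ k) = (a ^ i * b ^ j * c ^ k) * g :=
      Subgroup.mem_center_iff.mp (hZc hxZ)
    -- conjugating by a shows p ∣ j
    have hcj : c ^ j = 1 := by
      have hck_ai : Commute (c ^ k) a⁻¹ := ((hc_comm _).inv_right).pow_left _
      have haa : Commute a (a ^ i) := (Commute.refl a).pow_right _
      have h1 : a * (a ^ i * b ^ j * c ^ k) * a⁻¹ = c ^ j * (a ^ i * b ^ j * c ^ k) := by
        calc a * (a ^ i * b ^ j * c ^ k) * a⁻¹
            = (a * a ^ i) * b ^ j * (c ^ k * a⁻¹) := by group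
          _ = (a ^ i * a) * b ^ j * (a⁻¹ * c ^ k) := by rw [haa.eq, hck_ai.eq]
          _ = a ^ i * (a * b ^ j * a⁻¹) * c ^ k := by group
          _ = a ^ i * (c ^ j * b ^ j) * c ^ k := by rw [Q1]
          _ = (a ^ i * c ^ j) * b ^ j * c ^ k := by group
          _ = (c ^ j * a ^ i) * b ^ j * c ^ k := by rw [← ((hc_comm (a ^ i)).pow_left j).eq]
          _ = c ^ j * (a ^ i * b ^ j * c ^ k) := by group
      have h2 : a * (a ^ i * b ^ j * c ^ k) * a⁻¹ = a ^ i * b ^ j * c ^ k := by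
        rw [hxc a, mul_assoc, mul_inv_cancel, mul_one]
      have := h2.symm.trans h1
      exact (right_eq_mul.mp this)
    -- conjugating by b shows p ∣ i
    have hci : c ^ i = 1 := by
      have hck_bi : Commute (c ^ k) b⁻¹ := ((hc_comm _).inv_right).pow_left _
      have hcj_b : Commute b (b ^ j) := (Commute.refl b).pow_right _
      have h1 : b * (a ^ i * b ^ j * c ^ k) * b⁻¹ = c⁻¹ ^ i * (a ^ i * b ^ j * c ^ k) := by
        calc b * (a ^ i * b ^ j * c ^ k) * b⁻¹
            = (b * a ^ i * b⁻¹) * ((b * b ^ j) * b⁻¹) * ((b * c ^ k) * b⁻¹) := by group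
          _ = (c⁻¹ ^ i * a ^ i) * ((b ^ j * b) * b⁻¹) * ((c ^ k * b) * b⁻¹) := by
              rw [Q2, hcj_b.eq, ← ((hc_comm b).pow_left k).eq]
          _ = c⁻¹ ^ i * (a ^ i * b ^ j * c ^ k) := by group
      have h2 : b * (a ^ i * b ^ j * c ^ k) * b⁻¹ = a ^ i * b ^ j * c ^ k := by
        rw [hxc b, mul_assoc, mul_inv_cancel, mul_one]
      have h3 := (h2.symm.trans h1)
      have h4 : c⁻¹ ^ i = 1 := right_eq_mul.mp h3
      rw [inv_pow, inv_eq_one] at h4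
      exact h4
    have hjd : p ∣ j := horderc ▸ orderOf_dvd_of_pow_eq_one hcj
    have hid : p ∣ i := horderc ▸ orderOf_dvd_of_pow_eq_one hci
    obtain ⟨t, rfl⟩ := hjd
    obtain ⟨s, rfl⟩ := hid
    have hbj : b ^ (p * t) = 1 := by rw [pow_mul, hbp, one_pow]
    have hai : a ^ (p * s) = 1 := by rw [pow_mul, hap, one_pow]
    rw [hai, hbj, one_mul, one_mul]
    exact ⟨(k : ℤ), by simp⟩
  have hHZCc : Hgrp ⊓ Z = Cc := le_antisymm hHZle (le_inf hCcH hCcZ)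
  -- ⟨b⟩ ⊔ Z = N
  have hbZN : Subgroup.zpowers b ⊔ Z = N := by
    set K := Subgroup.zpowers b ⊔ Z with hKdef
    have hZK : Z ≤ K := le_sup_right
    have hKN : K ≤ N := sup_le (Subgroup.zpowers_le.mpr hbN) inf_le_right
    have hKne : K ≠ Z := fun h =>
      hbZ (h ▸ ((le_sup_left : Subgroup.zpowers b ≤ K) (Subgroup.mem_zpowers b)))
    have h1 := Subgroup.relIndex_mul_index hZK
    rw [hZidx] at h1
    have hdvd : K.index ∣ p * p := Dvd.intro_left _ h1
    rw [← sq] at hdvd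
    obtain ⟨k, hk, hkeq⟩ := (Nat.dvd_prime_pow hp).mp hdvd
    interval_cases k
    · exfalso
      rw [pow_zero] at hkeq
      have : N = ⊤ := top_unique (Subgroup.index_eq_one.mp hkeq ▸ hKN)
      rw [this, Subgroup.index_top] at hNidx
      exact hp.one_lt.ne' hNidx.symm
    · rw [pow_one] at hkeq
      exact aux_eq_of_le_of_index_eq hKN (hkeq.trans hNidx.symm)
    · exfalso
      rw [hkeq, sq] at h1
      have hpp : p * p ≠ 0 := by positivity
      have : Z.relIndex K = 1 := mul_right_cancel₀ hpp (h1.trans (one_mul _).symm)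
      exact hKne (le_antisymm (Subgroup.relIndex_eq_one.mp this) hZK)
  -- Hgrp ⊔ Z = ⊤
  have hHZtop : Hgrp ⊔ Z = ⊤ := by
    have hNle : N ≤ Hgrp ⊔ Z := by
      rw [← hbZN]
      exact sup_le (le_trans (Subgroup.zpowers_le.mpr hbH) le_sup_left) le_sup_right
    refine aux_top hp hNle hNidx (fun h => haN ?_)
    rw [h]
    exact (le_sup_left : Hgrp ≤ Hgrp ⊔ Z) haH
  -- Z as a vector space over ZMod p, and a complement of ⟨c⟩ inside Z
  letI : CommGroup ↥Z := { (inferInstance : Group ↥Z) with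
    mul_comm := fun x y =>
      Subtype.ext ((Subgroup.mem_center_iff.mp (hZc x.2) (y : T)).symm) }
  letI : Module (ZMod p) (Additive ↥Z) := auxMod p hppos ↥Z (by
    intro x
    apply Additive.toMul.injective
    rw [toMul_nsmul, toMul_zero]
    refine Subtype.ext ?_
    push_cast
    exact hMexp _ (Subgroup.mem_inf.mp x.toMul.2).1)
  let f : Subgroup ↥Z ≃o Submodule (ZMod p) (Additive ↥Z) :=
    (Subgroup.toAddSubgroup).trans (AddSubgroup.toZModSubmodule (n := p))
  obtain ⟨W', hW'⟩ := Submodule.exists_isCompl (f (Cc.subgroupOf Z))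
  set E₀ : Subgroup ↥Z := f.symm W' with hE0def
  have hinf0 : Cc.subgroupOf Z ⊓ E₀ = ⊥ := by
    calc Cc.subgroupOf Z ⊓ E₀
        = f.symm (f (Cc.subgroupOf Z)) ⊓ f.symm W' := by rw [f.symm_apply_apply]
      _ = f.symm (f (Cc.subgroupOf Z) ⊓ W') := (f.symm.map_inf _ _).symm
      _ = f.symm ⊥ := by rw [hW'.inf_eq_bot]
      _ = ⊥ := f.symm.map_bot
  have hsup0 : Cc.subgroupOf Z ⊔ E₀ = ⊤ := by
    calc Cc.subgroupOf Z ⊔ E₀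
        = f.symm (f (Cc.subgroupOf Z)) ⊔ f.symm W' := by rw [f.symm_apply_apply]
      _ = f.symm (f (Cc.subgroupOf Z) ⊔ W') := (f.symm.map_sup _ _).symm
      _ = f.symm ⊤ := by rw [hW'.sup_eq_top]
      _ = ⊤ := f.symm.map_top
  set Egrp : Subgroup T := E₀.map Z.subtype with hEdef
  have hEZ : Egrp ≤ Z := by
    rintro x ⟨y, _, rfl⟩
    exact y.2
  have hCcmap : (Cc.subgroupOf Z).map Z.subtype = Cc := by
    rw [Subgroup.subgroupOf_map_subtype]
    exact inf_of_le_left hCcZ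
  have hCcE : Cc ⊓ Egrp = ⊥ := by
    rw [← hCcmap, hEdef, ← Subgroup.map_inf _ _ Z.subtype Z.subtype_injective, hinf0,
      Subgroup.map_bot]
  have hCcEsup : Cc ⊔ Egrp = Z := by
    rw [← hCcmap, hEdef, ← Subgroup.map_sup, hsup0, ← MonoidHom.range_eq_map,
      Subgroup.range_subtype]
  -- Hgrp and Egrp give an internal direct product decomposition of T
  have hHEinf : Hgrp ⊓ Egrp = ⊥ := by
    apply le_antisymm _ bot_le
    intro x hx
    have : x ∈ Cc ⊓ Egrp := ⟨hHZle ⟨hx.1, hEZ hx.2⟩, hx.2⟩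
    rwa [hCcE] at this
  have hHEsup : Hgrp ⊔ Egrp = ⊤ := by
    rw [← top_le_iff, ← hHZtop]
    refine sup_le le_sup_left ?_
    rw [← hCcEsup]
    exact sup_le (le_trans hCcH le_sup_left) le_sup_right
  have hEcen : ∀ y ∈ Egrp, y ∈ Subgroup.center T := fun y hy => hZc (hEZ hy)
  obtain ⟨φ, hφinj, hφrange⟩ :=
    aux_iso (A := Hgrp) (B := Egrp)
      (fun x _ y hy => (Subgroup.mem_center_iff.mp (hEcen y hy) x : Commute x y)) hHEinf
  have hφsurj : Function.Surjective φ := by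
    rw [← MonoidHom.range_eq_top, hφrange, hHEsup]
  let e : (↥Hgrp × ↥Egrp) ≃* T := MulEquiv.ofBijective φ ⟨hφinj, hφsurj⟩
  -- cardinalities
  obtain ⟨ψ, hψinj, hψrange⟩ :=
    aux_iso (A := Cc) (B := Egrp)
      (fun x _ y hy => (Subgroup.mem_center_iff.mp (hEcen y hy) x : Commute x y)) hCcE
  have hCccard : Nat.card ↥Cc = p := by rw [hCcdef, Nat.card_zpowers, horderc]
  have hcardZ : Nat.card ↥Z = p * Nat.card ↥Egrp := by
    have e2 : ↥(ψ.range) ≃ (↥Cc × ↥Egrp) :=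
      (Equiv.setCongr (MonoidHom.coe_range ψ)).trans (Equiv.ofInjective ψ hψinj).symm
    have h1 : Nat.card ↥(Cc ⊔ Egrp) = Nat.card (↥Cc × ↥Egrp) := by
      rw [← hψrange]; exact Nat.card_congr e2
    rw [hCcEsup] at h1
    rw [h1, Nat.card_prod, hCccard]
  have hcardT : Nat.card T = Nat.card ↥Hgrp * Nat.card ↥Egrp := by
    rw [← Nat.card_prod]
    exact (Nat.card_congr e.toEquiv).symm
  have hcardT2 : Nat.card ↥Z * (p * p) = Nat.card T := by
    rw [← hZidx]
    exact Subgroup.card_mul_index Z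
  have hEpos : 0 < Nat.card ↥Egrp := Nat.card_pos
  have hcardH : Nat.card ↥Hgrp = p ^ 3 := by
    have h3 : Nat.card ↥Hgrp * Nat.card ↥Egrp = p ^ 3 * Nat.card ↥Egrp := by
      rw [← hcardT, ← hcardT2, hcardZ]; ring
    exact Nat.eq_of_mul_eq_mul_right hEpos h3
  -- assemble the final statement
  refine ⟨Hgrp, Egrp, ⟨hcardH, ⟨a, haH⟩, ⟨b, hbH⟩, ?_, ?_, ?_, ?_, ?_⟩,
    fun x hx y hy => (Subgroup.mem_center_iff.mp (hEcen y hy) x : Commute x y),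
    fun x hx => hMexp x (hEZ hx).1, ⟨e.symm⟩⟩
  · -- the images of a and b generate Hgrp
    apply Subgroup.map_injective Hgrp.subtype_injective
    rw [MonoidHom.map_closure, Set.image_pair, ← MonoidHom.range_eq_map,
      Subgroup.range_subtype]
    show Subgroup.closure {a, b} = Hgrp
    exact hHdef.symm
  · exact Subtype.ext (by push_cast; exact hap)
  · exact Subtype.ext (by push_cast; exact hbp)
  · refine Subtype.ext ?_
    push_cast [commutatorElement_def]
    exact hcp
  · rw [Subgroup.mem_center_iff]
    intro g
    exact Subtype.ext ((hc_comm (g : T)).symm.eq)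
end

section
/- Let p be a prime, G cyclic of order p acting on an elementary abelian p-group N (an F_p[G]-module), and T = N ⋊ G. If N is a free F_p[G]-module of rank r (i.e. a direct sum of r copies of F_p[G]), then Z(T) ∩ N = N^G has F_p-dimension r, T_{(p)} = N^{(g-1)^{p-1}} = N^G where g generates G, and T_{(p+1)} = 1. -/
/-- The underlying additive group of the free `F_p[G]`-module of rank `r`
(`G` cyclic of order `p`), realized as functions `Fin r × Z/p → Z/p`, where the
generator `g` of `G` acts by shifting the second coordinate. -/
abbrev Vrp (p r : ℕ) := Fin r × ZMod p → ZMod p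

/-- The shift action of `k ∈ Z/p` on the free module, as a multiplicative
automorphism. -/
def shiftEquiv (p r : ℕ) (k : ZMod p) :
    Multiplicative (Vrp p r) ≃* Multiplicative (Vrp p r) where
  toFun f := Multiplicative.ofAdd fun x => f.toAdd (x.1, x.2 - k)
  invFun f := Multiplicative.ofAdd fun x => f.toAdd (x.1, x.2 + k)
  left_inv f := by
    show Multiplicative.ofAdd (fun x : Fin r × ZMod p => f.toAdd (x.1, x.2 + k - k)) = f
    simp
  right_inv f := by
    show Multiplicative.ofAdd (fun x : Fin r × ZMod p => f.toAdd (x.1, x.2 - k + k)) = f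
    simp
  map_mul' f g := rfl

/-- The action of the cyclic group `G = Multiplicative (Z/p)` on the free module of
rank `r`, i.e. the `F_p[G]`-module structure map. -/
def shiftHom (p r : ℕ) :
    Multiplicative (ZMod p) →* MulAut (Multiplicative (Vrp p r)) where
  toFun k := shiftEquiv p r k.toAdd
  map_one' := by
    ext f : 1
    show Multiplicative.ofAdd (fun x : Fin r × ZMod p => f.toAdd (x.1, x.2 - 0)) = f
    simp
  map_mul' k l := by
    ext f : 1
    show Multiplicative.ofAdd
        (fun x : Fin r × ZMod p => f.toAdd (x.1, x.2 - (k.toAdd + l.toAdd)))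
      = Multiplicative.ofAdd
        (fun x : Fin r × ZMod p => f.toAdd (x.1, x.2 - k.toAdd - l.toAdd))
    congr 1
    funext x
    rw [sub_sub]

/-- The fixed subgroup `N^G` of the free module `N` under the generator
`g = ofAdd 1`. -/
def fixedN (p r : ℕ) : Subgroup (Multiplicative (Vrp p r)) where
  carrier := {x | shiftHom p r (Multiplicative.ofAdd (1 : ZMod p)) x = x}
  one_mem' := map_one _
  mul_mem' := by
    intro a b ha hb
    simp only [Set.mem_setOf_eq, map_mul] at *
    rw [ha, hb]
  inv_mem' := by
    intro a ha
    simp only [Set.mem_setOf_eq, map_inv] at *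
    rw [ha]

/-- The fixed submodule `N^G`, as an `F_p`-subspace of the free module. -/
def fixedM (p r : ℕ) : Submodule (ZMod p) (Vrp p r) where
  carrier := {f | ∀ x : Fin r × ZMod p, f (x.1, x.2 - 1) = f x}
  zero_mem' := by intro x; rfl
  add_mem' := by
    intro f g hf hg x
    simp only [Pi.add_apply, hf x, hg x]
  smul_mem' := by
    intro c f hf x
    simp only [Pi.smul_apply, hf x]


namespace Stmt16Aux

variable (p r : ℕ)

/-- shift by `k` as a linear endomorphism -/
def Sk (k : ZMod p) : Module.End (ZMod p) (Vrp p r) :=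
  { toFun := fun f x => f (x.1, x.2 - k)
    map_add' := fun _ _ => rfl
    map_smul' := fun _ _ => rfl }

lemma Sk_mul (k l : ZMod p) : Sk p r k * Sk p r l = Sk p r (k + l) := by
  ext f x
  show f (x.1, x.2 - k - l) = f (x.1, x.2 - (k + l))
  rw [sub_sub]

lemma Sk_zero : Sk p r 0 = 1 := by
  ext f x
  show f (x.1, x.2 - 0) = f x
  rw [sub_zero]

def σe : Module.End (ZMod p) (Vrp p r) := Sk p r 1

lemma σe_pow (n : ℕ) : (σe p r) ^ n = Sk p r (n : ZMod p) := by
  induction n with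
  | zero => simpa using (Sk_zero p r).symm
  | succ n ih =>
      rw [pow_succ, ih, σe, Sk_mul]
      push_cast
      ring_nf

def δe : Module.End (ZMod p) (Vrp p r) := σe p r - 1

lemma poly_id (hp : p.Prime) :
    (Polynomial.X - 1 : Polynomial (ZMod p)) ^ (p - 1)
      = ∑ k ∈ Finset.range p, Polynomial.X ^ k := by
  haveI := Fact.mk hp
  have hne : (Polynomial.X - 1 : Polynomial (ZMod p)) ≠ 0 := by
    simpa using Polynomial.X_sub_C_ne_zero (1 : ZMod p)
  apply mul_right_cancel₀ hne
  rw [geom_sum_mul, ← pow_succ, Nat.sub_add_cancel hp.one_lt.le]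
  rw [sub_pow_char]
  simp

lemma δe_pow_p (hp : p.Prime) : (δe p r) ^ p = 0 := by
  haveI := Fact.mk hp
  have h1 : δe p r = Polynomial.aeval (σe p r) (Polynomial.X - 1 : Polynomial (ZMod p)) := by
    simp [δe]
  have h2 : (δe p r) ^ p
      = Polynomial.aeval (σe p r) ((Polynomial.X - 1 : Polynomial (ZMod p)) ^ p) := by
    rw [map_pow, ← h1]
  rw [h2, sub_pow_char]
  simp only [map_sub, map_pow, Polynomial.aeval_X, map_one, one_pow]
  rw [σe_pow, CharP.cast_eq_zero, Sk_zero, sub_self]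

lemma δe_pow_pred (hp : p.Prime) :
    (δe p r) ^ (p - 1) = ∑ k ∈ Finset.range p, Sk p r (k : ZMod p) := by
  have h1 : δe p r = Polynomial.aeval (σe p r) (Polynomial.X - 1 : Polynomial (ZMod p)) := by
    simp [δe]
  have h2 : (δe p r) ^ (p-1)
      = Polynomial.aeval (σe p r) ((Polynomial.X - 1 : Polynomial (ZMod p)) ^ (p-1)) := by
    rw [map_pow, ← h1]
  rw [h2, poly_id p hp, map_sum]
  simp only [map_pow, Polynomial.aeval_X, σe_pow]

variable {p r}

/-- the fixed-point predicate -/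
def Fix (f : Vrp p r) : Prop := ∀ x : Fin r × ZMod p, f (x.1, x.2 - 1) = f x

lemma fix_iff (f : Vrp p r) : Fix f ↔ δe p r f = 0 := by
  constructor
  · intro h
    funext x
    show f (x.1, x.2 - 1) - f x = 0
    rw [h x, sub_self]
  · intro h x
    have h2 := congrFun h x
    have h3 : f (x.1, x.2 - 1) - f x = 0 := h2
    rwa [sub_eq_zero] at h3

lemma fix_shift_nat {f : Vrp p r} (hf : Fix f) (n : ℕ) (x : Fin r × ZMod p) :
    f (x.1, x.2 - (n : ZMod p)) = f x := by
  induction n with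
  | zero => simp
  | succ n ih =>
      have := hf (x.1, x.2 - (n : ZMod p))
      push_cast
      rw [← sub_sub]
      rw [this]
      exact ih

lemma fix_shift {f : Vrp p r} (hf : Fix f) (k : ZMod p) [NeZero p] (x : Fin r × ZMod p) :
    f (x.1, x.2 - k) = f x := by
  have := fix_shift_nat hf k.val x
  rwa [ZMod.natCast_rightInverse k] at this

lemma fix_const {f : Vrp p r} (hf : Fix f) [NeZero p] (i : Fin r) (y : ZMod p) :
    f (i, y) = f (i, 0) := by
  have := fix_shift hf y (i, y)
  simp at this
  exact this.symm

lemma range_le_ker (hp : p.Prime) :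
    LinearMap.range ((δe p r) ^ (p - 1)) ≤ LinearMap.ker (δe p r) := by
  rintro x ⟨g, rfl⟩
  have : δe p r (((δe p r) ^ (p-1)) g) = ((δe p r) ^ p) g := by
    rw [← Module.End.mul_apply, ← pow_succ', Nat.sub_add_cancel hp.one_lt.le]
  rw [LinearMap.mem_ker, this, δe_pow_p p r hp]
  rfl

lemma ker_le_range (hp : p.Prime) :
    LinearMap.ker (δe p r) ≤ LinearMap.range ((δe p r) ^ (p - 1)) := by
  haveI : NeZero p := ⟨hp.ne_zero⟩
  intro f hf
  rw [LinearMap.mem_ker] at hf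
  have hfix : Fix f := (fix_iff f).2 hf
  refine ⟨fun x => if x.2 = 0 then f (x.1, 0) else 0, ?_⟩
  funext x
  rw [δe_pow_pred p r hp]
  have : ((∑ k ∈ Finset.range p, Sk p r (k : ZMod p))
      (fun x : Fin r × ZMod p => if x.2 = 0 then f (x.1, 0) else 0)) x
      = ∑ k ∈ Finset.range p, (if x.2 - (k : ZMod p) = 0 then f (x.1, 0) else 0) := by
    rw [LinearMap.sum_apply]
    exact Finset.sum_apply x _ _
  rw [this, Finset.sum_eq_single x.2.val]
  · rw [ZMod.natCast_rightInverse x.2, sub_self, if_pos rfl]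
    exact (fix_const hfix x.1 x.2).symm ▸ (by rw [← fix_const hfix x.1 x.2])
  · intro k hk hne
    rw [if_neg]
    intro h
    rw [sub_eq_zero] at h
    apply hne
    rw [← ZMod.val_cast_of_lt (Finset.mem_range.1 hk), ← h]
  · intro h
    exact absurd (Finset.mem_range.2 (ZMod.val_lt x.2)) h

lemma range_eq_ker (hp : p.Prime) :
    LinearMap.range ((δe p r) ^ (p - 1)) = LinearMap.ker (δe p r) :=
  le_antisymm (range_le_ker hp) (ker_le_range hp)

end Stmt16Aux


namespace Stmt16Aux

open SemidirectProduct Multiplicative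
open scoped commutatorElement

lemma comm_formula {N G : Type*} [CommGroup N] [CommGroup G] (φ : G →* MulAut N)
    (a b : N ⋊[φ] G) :
    ⁅a, b⁆ = SemidirectProduct.inl
      (φ a.right b.left * b.left⁻¹ * (φ b.right a.left * a.left⁻¹)⁻¹) := by
  have k1 : ∀ (x y : G) (w : N), (φ x) ((φ y) w) = φ (x * y) w := by
    intro x y w; rw [map_mul]; rfl
  have k2 : ∀ (x : G) (w : N), (φ x)⁻¹ w = φ x⁻¹ w := by
    intro x w; rw [map_inv]
  ext
  · simp only [commutatorElement_def, mul_left, inv_left, mul_right, inv_right, left_inl]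
    simp only [k2, k1, map_inv]
    norm_num [mul_comm, mul_left_comm]
    simp only [mul_assoc]
    exact mul_left_comm _ _ _
  · simp only [commutatorElement_def, mul_right, inv_right, right_inl]
    rw [mul_comm a.right b.right]
    group

variable (p r : ℕ)

/-- the semidirect product `T` -/
abbrev Tp := Multiplicative (Vrp p r) ⋊[shiftHom p r] Multiplicative (ZMod p)

/-- the subgroup of `N` corresponding to the submodule `(g-1)^n N` -/
def Dn (n : ℕ) : Subgroup (Multiplicative (Vrp p r)) where
  carrier := {x | Multiplicative.toAdd x ∈ LinearMap.range ((δe p r) ^ n)}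
  one_mem' := ⟨0, map_zero _⟩
  mul_mem' := by rintro a b ⟨u, hu⟩ ⟨v, hv⟩; exact ⟨u + v, by rw [map_add, hu, hv]; rfl⟩
  inv_mem' := by rintro a ⟨u, hu⟩; exact ⟨-u, by rw [map_neg, hu]; rfl⟩

variable {p r}

lemma mem_Dn {n : ℕ} {x : Multiplicative (Vrp p r)} :
    x ∈ Dn p r n ↔ Multiplicative.toAdd x ∈ LinearMap.range ((δe p r) ^ n) := Iff.rfl

lemma mem_Dn_zero (x : Multiplicative (Vrp p r)) : x ∈ Dn p r 0 := by
  rw [mem_Dn]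
  exact ⟨Multiplicative.toAdd x, by rw [pow_zero]; rfl⟩

lemma toAdd_shift (y : Multiplicative (ZMod p)) (x : Multiplicative (Vrp p r)) :
    Multiplicative.toAdd (shiftHom p r y x)
      = Sk p r (Multiplicative.toAdd y) (Multiplicative.toAdd x) := rfl

lemma toAdd_dfun (y : Multiplicative (ZMod p)) (x : Multiplicative (Vrp p r)) :
    Multiplicative.toAdd (shiftHom p r y x * x⁻¹)
      = Sk p r (Multiplicative.toAdd y) (Multiplicative.toAdd x)
          - Multiplicative.toAdd x := by
  show Sk p r (Multiplicative.toAdd y) (Multiplicative.toAdd x)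
      + (- Multiplicative.toAdd x) = _
  rw [← sub_eq_add_neg]

lemma shift_sub_mem (j n : ℕ) (u : Vrp p r) :
    (σe p r ^ j) ((δe p r ^ n) u) - (δe p r ^ n) u
      ∈ LinearMap.range ((δe p r) ^ (n + 1)) := by
  refine ⟨(Polynomial.aeval (σe p r) (∑ i ∈ Finset.range j, (Polynomial.X : Polynomial (ZMod p)) ^ i)) u, ?_⟩
  have key : (δe p r) ^ (n + 1)
        * Polynomial.aeval (σe p r) (∑ i ∈ Finset.range j, (Polynomial.X : Polynomial (ZMod p)) ^ i)
      = (σe p r ^ j - 1) * (δe p r) ^ n := by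
    have hδ : (δe p r) = Polynomial.aeval (σe p r) (Polynomial.X - 1 : Polynomial (ZMod p)) := by
      simp [δe]
    have hσ : (σe p r) ^ j - 1
        = Polynomial.aeval (σe p r) ((Polynomial.X : Polynomial (ZMod p)) ^ j - 1) := by
      simp
    rw [hδ, hσ, ← map_pow, ← map_pow, ← map_mul, ← map_mul]
    congr 1
    rw [← geom_sum_mul]
    ring
  have h2 := congrArg (fun F : Module.End (ZMod p) (Vrp p r) => F u) key
  simp only [Module.End.mul_apply] at h2
  rw [h2, LinearMap.sub_apply, Module.End.one_apply]

lemma dfun_mem [NeZero p] {n : ℕ} (y : Multiplicative (ZMod p)) {x : Multiplicative (Vrp p r)}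
    (hx : x ∈ Dn p r n) :
    shiftHom p r y x * x⁻¹ ∈ Dn p r (n + 1) := by
  obtain ⟨u, hu⟩ := hx
  rw [mem_Dn, toAdd_dfun, ← hu,
    show Sk p r (Multiplicative.toAdd y) = σe p r ^ (Multiplicative.toAdd y).val by
      rw [σe_pow, ZMod.natCast_rightInverse]]
  exact shift_sub_mem _ _ _

lemma comm_step [NeZero p] (n : ℕ) :
    ⁅Subgroup.map (inl : _ →* Tp p r) (Dn p r n), (⊤ : Subgroup (Tp p r))⁆
      ≤ Subgroup.map inl (Dn p r (n + 1)) := by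
  rw [Subgroup.commutator_le]
  rintro g₁ ⟨m, hm, rfl⟩ g₂ -
  rw [comm_formula]
  have e1 : shiftHom p r ((inl m : Tp p r).right) g₂.left = g₂.left := by
    rw [right_inl, map_one]; rfl
  refine ⟨_, ?_, rfl⟩
  rw [e1, mul_inv_cancel, one_mul, left_inl]
  exact (Dn p r (n + 1)).inv_mem (dfun_mem g₂.right hm)

lemma comm_top [NeZero p] :
    ⁅(⊤ : Subgroup (Tp p r)), (⊤ : Subgroup (Tp p r))⁆
      ≤ Subgroup.map inl (Dn p r 1) := by
  rw [Subgroup.commutator_le]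
  rintro a - b -
  rw [comm_formula]
  exact ⟨_, mul_mem (dfun_mem a.right (mem_Dn_zero b.left))
    ((Dn p r 1).inv_mem (dfun_mem b.right (mem_Dn_zero a.left))), rfl⟩

lemma lcs_le [NeZero p] (n : ℕ) :
    (⊤ : Subgroup (Tp p r)).lowerCentralSeries (n + 1) ≤ Subgroup.map inl (Dn p r (n + 1)) := by
  induction n with
  | zero =>
      rw [Subgroup.lowerCentralSeries_succ, Subgroup.lowerCentralSeries_zero]
      exact comm_top
  | succ n ih =>
      rw [Subgroup.lowerCentralSeries_succ]
      exact le_trans (Subgroup.commutator_mono ih le_rfl) (comm_step (n + 1))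

lemma lcs_ge [NeZero p] (n : ℕ) :
    Subgroup.map (inl : _ →* Tp p r) (Dn p r n) ≤ (⊤ : Subgroup (Tp p r)).lowerCentralSeries n := by
  induction n with
  | zero => exact le_top
  | succ n ih =>
      rintro t ⟨x, hx, rfl⟩
      obtain ⟨u, hu⟩ := hx
      set m : Multiplicative (Vrp p r) := Multiplicative.ofAdd ((δe p r ^ n) u) with hm
      have hmD : m ∈ Dn p r n := ⟨u, rfl⟩
      have hg : inl x = ⁅(inl m : Tp p r), (inr (Multiplicative.ofAdd (1 : ZMod p)) : Tp p r)⁆⁻¹ := by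
        rw [comm_formula]
        simp only [right_inl, left_inl, left_inr, right_inr, map_one]
        rw [← SemidirectProduct.inl.map_inv]
        congr 1
        rw [inv_one, mul_one, one_mul, inv_inv]
        apply Multiplicative.toAdd.injective
        rw [toAdd_dfun, toAdd_ofAdd]
        have e1 : Sk p r 1 (Multiplicative.toAdd m) - Multiplicative.toAdd m
            = (δe p r) ((δe p r ^ n) u) := by
          show _ = (σe p r - 1) ((δe p r ^ n) u)
          rw [LinearMap.sub_apply, Module.End.one_apply]
          rfl
        rw [e1, ← Module.End.mul_apply, ← pow_succ', hu]
      rw [hg, Subgroup.lowerCentralSeries_succ]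
      exact ((⊤ : Subgroup (Tp p r)).lowerCentralSeries (n + 1)).inv_mem
        (Subgroup.commutator_mem_commutator (ih ⟨m, hmD, rfl⟩) (Subgroup.mem_top _))

lemma lcs_eq [NeZero p] (n : ℕ) :
    (⊤ : Subgroup (Tp p r)).lowerCentralSeries (n + 1) = Subgroup.map inl (Dn p r (n + 1)) :=
  le_antisymm (lcs_le n) (lcs_ge (n + 1))

lemma mem_fixedN_iff {x : Multiplicative (Vrp p r)} :
    x ∈ fixedN p r ↔ δe p r (Multiplicative.toAdd x) = 0 := by
  have happ : δe p r (Multiplicative.toAdd x)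
      = Sk p r 1 (Multiplicative.toAdd x) - Multiplicative.toAdd x := by
    show (σe p r - 1) (Multiplicative.toAdd x) = _
    rw [LinearMap.sub_apply, Module.End.one_apply]; rfl
  constructor
  · intro h
    have h2 := congrArg Multiplicative.toAdd (h : shiftHom p r (Multiplicative.ofAdd 1) x = x)
    rw [toAdd_shift, toAdd_ofAdd] at h2
    rw [happ, h2, sub_self]
  · intro h
    rw [happ, sub_eq_zero] at h
    show shiftHom p r (Multiplicative.ofAdd 1) x = x
    apply Multiplicative.toAdd.injective
    rw [toAdd_shift]
    exact h

lemma Dn_pred_eq_fixedN (hp : p.Prime) : Dn p r (p - 1) = fixedN p r := by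
  ext x
  rw [mem_Dn, range_eq_ker hp, LinearMap.mem_ker, mem_fixedN_iff]

lemma fixedN_all_shifts (hp : p.Prime) {x : Multiplicative (Vrp p r)}
    (hx : x ∈ fixedN p r) (y : Multiplicative (ZMod p)) :
    shiftHom p r y x = x := by
  haveI : NeZero p := ⟨hp.ne_zero⟩
  have hfix : Fix (Multiplicative.toAdd x) := (fix_iff _).2 (mem_fixedN_iff.1 hx)
  apply Multiplicative.toAdd.injective
  rw [toAdd_shift]
  funext z
  exact fix_shift hfix (Multiplicative.toAdd y) z

lemma center_inter (hp : p.Prime) :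
    Subgroup.center (Tp p r) ⊓ (inl : _ →* Tp p r).range
      = Subgroup.map inl (fixedN p r) := by
  apply le_antisymm
  · rintro t ⟨hc, m, rfl⟩
    refine ⟨m, ?_, rfl⟩
    have h := (Subgroup.mem_center_iff.1 hc) (inr (Multiplicative.ofAdd (1 : ZMod p)))
    have h2 := congrArg SemidirectProduct.left h
    simp only [mul_left, left_inr, right_inr, left_inl, right_inl, map_one, one_mul] at h2
    show shiftHom p r (Multiplicative.ofAdd (1 : ZMod p)) m = m
    rw [h2]
    show m * shiftHom p r (Multiplicative.ofAdd (1 : ZMod p)) (1 : Multiplicative (Vrp p r)) = m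
    rw [map_one, mul_one]
  · rintro t ⟨m, hm, rfl⟩
    refine ⟨Subgroup.mem_center_iff.2 fun t => ?_, ⟨m, rfl⟩⟩
    ext : 1
    · simp only [mul_left, left_inl, right_inl, map_one]
      rw [fixedN_all_shifts hp hm t.right, MulAut.one_apply]
      exact mul_comm _ _
    · simp only [mul_right, right_inl]
      rw [one_mul, mul_one]

lemma Dn_p_eq_bot (hp : p.Prime) : Dn p r p = ⊥ := by
  ext x
  rw [mem_Dn, δe_pow_p p r hp, Subgroup.mem_bot]
  constructor
  · rintro ⟨u, hu⟩
    apply Multiplicative.toAdd.injective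
    exact hu.symm
  · rintro rfl
    exact ⟨0, rfl⟩

lemma d_iter (n : ℕ) (x : Multiplicative (Vrp p r)) :
    ((fun x : Multiplicative (Vrp p r) =>
        shiftHom p r (Multiplicative.ofAdd (1 : ZMod p)) x * x⁻¹)^[n]) x
      = Multiplicative.ofAdd (((δe p r) ^ n) (Multiplicative.toAdd x)) := by
  induction n with
  | zero =>
      rw [Function.iterate_zero_apply, pow_zero]
      rfl
  | succ n ih =>
      rw [Function.iterate_succ_apply', ih]
      apply Multiplicative.toAdd.injective
      rw [toAdd_dfun]
      show Sk p r 1 ((δe p r ^ n) (Multiplicative.toAdd x))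
          - (δe p r ^ n) (Multiplicative.toAdd x) = _
      rw [pow_succ', Module.End.mul_apply]
      show _ = (σe p r - 1) ((δe p r ^ n) (Multiplicative.toAdd x))
      rw [LinearMap.sub_apply, Module.End.one_apply]
      rfl

lemma range_d_iter (n : ℕ) :
    Set.range ((fun x : Multiplicative (Vrp p r) =>
        shiftHom p r (Multiplicative.ofAdd (1 : ZMod p)) x * x⁻¹)^[n])
      = (Dn p r n : Set (Multiplicative (Vrp p r))) := by
  ext z
  simp only [Set.mem_range, d_iter]
  constructor
  · rintro ⟨y, rfl⟩
    exact ⟨Multiplicative.toAdd y, rfl⟩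
  · rintro ⟨u, hu⟩
    exact ⟨Multiplicative.ofAdd u, by
      show Multiplicative.ofAdd ((δe p r ^ n) u) = z
      rw [hu, ofAdd_toAdd]⟩

lemma finrank_fixedM (hp : p.Prime) :
    Module.finrank (ZMod p) (fixedM p r) = r := by
  haveI := Fact.mk hp
  haveI : NeZero p := ⟨hp.ne_zero⟩
  let e : fixedM p r ≃ₗ[ZMod p] (Fin r → ZMod p) :=
    { toFun := fun f i => (f : Vrp p r) (i, 0)
      map_add' := fun f g => rfl
      map_smul' := fun c f => rfl
      invFun := fun c => ⟨fun x => c x.1, fun x => rfl⟩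
      left_inv := fun f => Subtype.ext (funext fun x => (fix_const f.2 x.1 x.2).symm)
      right_inv := fun c => rfl }
  rw [e.finrank_eq, Module.finrank_pi]
  exact Fintype.card_fin r

end Stmt16Aux

/-- Let `p` be a prime, `G` cyclic of order `p` (with generator `g`)
acting on an elementary abelian `p`-group `N` which is a free `F_p[G]`-module of rank
`r`, and `T = N ⋊ G`.  Then `Z(T) ∩ N = N^G` and `N^G` has `F_p`-dimension `r`;
moreover `T_{(p)} = N^{(g-1)^{p-1}} = N^G` (in Mathlib's indexing `T_{(p)}` is
`lowerCentralSeries T (p-1)`), and `T_{(p+1)} = lowerCentralSeries T p = 1`. -/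
theorem stmt16 (p : ℕ) (hp : p.Prime) (r : ℕ) :
    Subgroup.center (Multiplicative (Vrp p r) ⋊[shiftHom p r] Multiplicative (ZMod p)) ⊓
        (SemidirectProduct.inl :
          Multiplicative (Vrp p r) →*
            Multiplicative (Vrp p r) ⋊[shiftHom p r] Multiplicative (ZMod p)).range
      = Subgroup.map SemidirectProduct.inl (fixedN p r) ∧
    Module.finrank (ZMod p) (fixedM p r) = r ∧
    (⊤ : Subgroup (Multiplicative (Vrp p r) ⋊[shiftHom p r] Multiplicative (ZMod p))).lowerCentralSeries
        (p - 1)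
      = Subgroup.map SemidirectProduct.inl (fixedN p r) ∧
    (↑((⊤ : Subgroup
          (Multiplicative (Vrp p r) ⋊[shiftHom p r] Multiplicative (ZMod p))).lowerCentralSeries (p - 1)) :
        Set (Multiplicative (Vrp p r) ⋊[shiftHom p r] Multiplicative (ZMod p)))
      = SemidirectProduct.inl ''
          Set.range ((fun x : Multiplicative (Vrp p r) =>
            shiftHom p r (Multiplicative.ofAdd (1 : ZMod p)) x * x⁻¹)^[p - 1]) ∧
    (⊤ : Subgroup (Multiplicative (Vrp p r) ⋊[shiftHom p r] Multiplicative (ZMod p))).lowerCentralSeries p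
      = ⊥ := by
  classical
  have hp1 : p - 1 = (p - 2) + 1 := by
    have := hp.two_le; omega
  have hp2 : p = (p - 1) + 1 := by
    have := hp.two_le; omega
  haveI : NeZero p := ⟨hp.ne_zero⟩
  refine ⟨Stmt16Aux.center_inter hp, Stmt16Aux.finrank_fixedM hp, ?_, ?_, ?_⟩
  · rw [hp1, Stmt16Aux.lcs_eq, ← hp1, Stmt16Aux.Dn_pred_eq_fixedN hp]
  · rw [hp1, Stmt16Aux.lcs_eq, ← hp1, Subgroup.coe_map, Stmt16Aux.range_d_iter]
  · rw [hp2, Stmt16Aux.lcs_eq, ← hp2, Stmt16Aux.Dn_p_eq_bot hp, Subgroup.map_bot]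
end
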